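/- arXiv:2509.02293 — 7 statements merged into one kernel-verified Lean document; each statement's English description precedes it below -/
import Mathlib

section
/- Let d ≥ 1, let ρ be a Hermitian positive semidefinite d×d complex matrix, and let O₁,…,O_n (n ≥ 1) be d×d complex matrices. Then the series Σ_{m≥0} (exp(−Tr ρ)/m!) · Tr(ρ^{⊗m} · λ_m(O₁) · λ_m(O₂) ⋯ λ_m(O_n)) converges absolutely, and its sum equals Σ_σ ∏_{A∈σ} Tr(ρ · ∏_{j∈A} O_j), where σ runs over all set partitions of {1,…,n} and for each block A the product ∏_{j∈A} O_j is taken in increasing order of the indices j. (This is the Poisson moment formula: the n-point correlation function of the Poisson-quantized operators λ(O_i) in the Poisson state φ_ω associated with the finite weight ω(x) = Tr(ρx).) -/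
open scoped BigOperators ComplexOrder

namespace Stmt0
noncomputable section

/-- A set partition of `Fin n`: a finset of pairwise disjoint nonempty blocks whose union is
everything. -/
def IsSetPartition {n : ℕ} (σ : Finset (Finset (Fin n))) : Prop :=
  ∅ ∉ σ ∧ (∀ A ∈ σ, ∀ B ∈ σ, A ≠ B → Disjoint A B) ∧ σ.sup id = Finset.univ

instance {n : ℕ} (σ : Finset (Finset (Fin n))) : Decidable (IsSetPartition σ) :=
  inferInstanceAs (Decidable (∅ ∉ σ ∧ (∀ A ∈ σ, ∀ B ∈ σ, A ≠ B → Disjoint A B) ∧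
    σ.sup id = Finset.univ))

/-- `m`-fold Kronecker tensor power of a `d × d` matrix, realized on the index type
`Fin m → Fin d`. -/
def kronPow {d : ℕ} (ρ : Matrix (Fin d) (Fin d) ℂ) (m : ℕ) :
    Matrix (Fin m → Fin d) (Fin m → Fin d) ℂ :=
  Matrix.of fun f g => ∏ l : Fin m, ρ (f l) (g l)

/-- `O` placed in the `j`-th tensor slot, identity elsewhere. -/
def emb {d m : ℕ} (j : Fin m) (O : Matrix (Fin d) (Fin d) ℂ) :
    Matrix (Fin m → Fin d) (Fin m → Fin d) ℂ :=
  Matrix.of fun f g =>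
    O (f j) (g j) * ∏ l ∈ Finset.univ.erase j, (if f l = g l then (1 : ℂ) else 0)

/-- The `m`-th degree Poisson quantization map `λ_m(O) = Σ_{j<m} emb_j O`
(in particular `λ_0(O) = 0`). -/
def lamDeg {d : ℕ} (m : ℕ) (O : Matrix (Fin d) (Fin d) ℂ) :
    Matrix (Fin m → Fin d) (Fin m → Fin d) ℂ :=
  ∑ j : Fin m, emb j O

/-- Ordered product of the matrices `O j`, `j ∈ A`, in increasing order of the index `j`;
the empty product is the identity. -/
def orderedProd {n d : ℕ} (O : Fin n → Matrix (Fin d) (Fin d) ℂ) (A : Finset (Fin n)) :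
    Matrix (Fin d) (Fin d) ℂ :=
  ((A.sort (· ≤ ·)).map O).prod

/-! Expanding each `λ_m(O_i) = Σ_j emb_j(O_i)`, the trace `Tr(ρ^{⊗m} λ_m(O₁) ⋯ λ_m(O_n))` becomes a
sum over maps `f` from `{1, …, n}` to the `m` tensor slots. All the matrices involved are product
tensors, so the term of `f` factorises over the slots as `∏_s Tr(ρ ∏_{f i = s} O_i)`; it is
`Tr(ρ)^{m - |σ|} ∏_{A ∈ σ} Tr(ρ ∏_{j ∈ A} O_j)`, where `σ` is the partition of `{1, …, n}` into the
nonempty fibres of `f`, and exactly `m (m - 1) ⋯ (m - |σ| + 1)` maps induce a given `σ`. Finally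
`Σ_m e^{-t} m (m - 1) ⋯ (m - k + 1) t^{m-k} / m! = 1` for `t = Tr ρ` (the `k`-th derivative of the
exponential series), so the Poisson average over `m` leaves exactly the sum over partitions. -/

open Finset

theorem list_prod_ofFn_sum {R κ : Type*} [Semiring R] [Fintype κ] :
    ∀ {n : ℕ} (M : Fin n → κ → R),
      (List.ofFn fun i => ∑ j, M i j).prod = ∑ f : Fin n → κ, (List.ofFn fun i => M i (f i)).prod
  | 0, M => by simp
  | n + 1, M => by
    rw [List.ofFn_succ, List.prod_cons, list_prod_ofFn_sum fun i => M i.succ, sum_mul_sum,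
      ← (Fin.consEquiv fun _ => κ).sum_comp, Fintype.sum_prod_type]
    simp [Fin.consEquiv]

theorem list_prod_ofFn_ite_one {M : Type*} [Monoid M] {n : ℕ} (O : Fin n → M)
    (p : Fin n → Prop) [DecidablePred p] :
    (List.ofFn fun i => if p i then O i else 1).prod
      = ((({i | p i} : Finset (Fin n)).sort (· ≤ ·)).map O).prod := by
  have hsort : ({i | p i} : Finset (Fin n)).sort (· ≤ ·) = (List.finRange n).filter (p ·) := by
    refine List.Perm.eq_of_pairwise' (pairwise_sort _ _)
      ((List.pairwise_le_finRange n).filter _) ?_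
    refine (List.perm_ext_iff_of_nodup (sort_nodup _ _) ((List.nodup_finRange n).filter _)).mpr
      fun a => ?_
    simp
  rw [hsort, List.ofFn_eq_map]
  induction List.finRange n with
  | nil => simp
  | cons a l ih => by_cases h : p a <;> simp [h, ih]

section PiKronecker

variable {ι κ R : Type*} [Fintype ι] [DecidableEq ι] [Fintype κ] [DecidableEq κ] [CommSemiring R]

def piKronecker : (ι → Matrix κ κ R) →* Matrix (ι → κ) (ι → κ) R where
  toFun M := Matrix.of fun f g => ∏ s, M s (f s) (g s)
  map_one' := by
    ext f g
    by_cases h : f = g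
    · subst h; simp [Matrix.one_apply]
    · obtain ⟨s, hs⟩ := Function.ne_iff.mp h
      simp [Matrix.one_apply, h, prod_eq_zero (mem_univ s), hs]
  map_mul' M N := by
    ext f g
    simp only [Matrix.of_apply, Matrix.mul_apply, Pi.mul_apply, Fintype.prod_sum,
      prod_mul_distrib]

theorem piKronecker_apply (M : ι → Matrix κ κ R) (f g : ι → κ) :
    piKronecker M f g = ∏ s, M s (f s) (g s) := rfl

theorem trace_piKronecker (M : ι → Matrix κ κ R) :
    (piKronecker M).trace = ∏ s, (M s).trace := by
  simp only [Matrix.trace, Matrix.diag, piKronecker_apply, Fintype.prod_sum]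

end PiKronecker

theorem kronPow_eq_piKronecker {d : ℕ} (ρ : Matrix (Fin d) (Fin d) ℂ) (m : ℕ) :
    kronPow ρ m = piKronecker fun _ => ρ := rfl

theorem emb_eq_piKronecker {d m : ℕ} (j : Fin m) (O : Matrix (Fin d) (Fin d) ℂ) :
    emb j O = piKronecker (Pi.mulSingle j O) := by
  ext f g
  rw [emb, Matrix.of_apply, piKronecker_apply, ← mul_prod_erase _ _ (mem_univ j)]
  refine congrArg₂ _ (by simp) (prod_congr rfl fun l hl => ?_)
  simp [ne_of_mem_erase hl, Matrix.one_apply]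

section Fibers

variable {ι κ : Type*} [Fintype ι] [DecidableEq κ]

def fiber (f : ι → κ) (s : κ) : Finset ι := {i | f i = s}

@[simp] theorem mem_fiber {f : ι → κ} {s : κ} {i : ι} : i ∈ fiber f s ↔ f i = s := by
  simp [fiber]

theorem fiber_injOn (f : ι → κ) : Set.InjOn (fiber f) (univ.image f) := by
  intro s hs t _ hst
  obtain ⟨i, -, rfl⟩ := mem_image.mp hs
  exact mem_fiber.mp (hst ▸ mem_fiber.mpr rfl)

variable [DecidableEq ι]

def fiberPartition (f : ι → κ) : Finset (Finset ι) := (univ.image f).image (fiber f)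

theorem mem_fiberPartition {f : ι → κ} {A : Finset ι} :
    A ∈ fiberPartition f ↔ ∃ i, fiber f (f i) = A := by
  simp [fiberPartition]

theorem fiber_eq_of_mem_fiberPartition {f : ι → κ} {A : Finset ι} (hA : A ∈ fiberPartition f)
    {i : ι} (hi : i ∈ A) : fiber f (f i) = A := by
  obtain ⟨j, rfl⟩ := mem_fiberPartition.mp hA
  rw [mem_fiber.mp hi]

theorem prod_fiber_eq {M : Type*} [CommMonoid M] [Fintype κ] (f : ι → κ) (G : Finset ι → M) :
    ∏ s, G (fiber f s)
      = G ∅ ^ (Fintype.card κ - #(fiberPartition f)) * ∏ A ∈ fiberPartition f, G A := by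
  have hempty : ∀ s ∈ (univ.image f)ᶜ, G (fiber f s) = G ∅ := fun s hs => by
    rw [fiber, filter_eq_empty_iff.mpr fun i _ (h : f i = s) =>
      mem_compl.mp hs (h ▸ mem_image_of_mem f (mem_univ i))]
  rw [← prod_mul_prod_compl (univ.image f), mul_comm, prod_congr rfl hempty, prod_const,
    card_compl, fiberPartition, prod_image (fiber_injOn f), card_image_of_injOn (fiber_injOn f)]

end Fibers

section SetPartitions

variable {n : ℕ} {σ : Finset (Finset (Fin n))}

theorem IsSetPartition.nonempty (hσ : IsSetPartition σ) {A : Finset (Fin n)} (hA : A ∈ σ) :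
    A.Nonempty :=
  nonempty_iff_ne_empty.mpr fun h => hσ.1 (h ▸ hA)

theorem IsSetPartition.existsUnique_mem (hσ : IsSetPartition σ) (i : Fin n) :
    ∃! A : σ, i ∈ A.1 := by
  obtain ⟨A, hA, hi⟩ := mem_sup.mp (hσ.2.2 ▸ mem_univ i)
  refine ⟨⟨A, hA⟩, hi, fun B hB => Subtype.ext ?_⟩
  by_contra hne
  exact disjoint_left.mp (hσ.2.1 B B.2 A hA hne) hB hi

def IsSetPartition.blockOf (hσ : IsSetPartition σ) (i : Fin n) : σ :=
  (hσ.existsUnique_mem i).exists.choose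

theorem IsSetPartition.blockOf_eq_iff (hσ : IsSetPartition σ) {i : Fin n} {A : σ} :
    hσ.blockOf i = A ↔ i ∈ A.1 :=
  ⟨fun h => h ▸ (hσ.existsUnique_mem i).exists.choose_spec,
    fun h => (hσ.existsUnique_mem i).unique (hσ.existsUnique_mem i).exists.choose_spec h⟩

theorem isSetPartition_fiberPartition {κ : Type*} [DecidableEq κ] (f : Fin n → κ) :
    IsSetPartition (fiberPartition f) := by
  refine ⟨fun h => ?_, fun A hA B hB hAB => disjoint_left.mpr fun i hiA hiB => hAB ?_, ?_⟩
  · obtain ⟨i, hi⟩ := mem_fiberPartition.mp h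
    simpa [hi] using (mem_fiber.mpr rfl : i ∈ fiber f (f i))
  · rw [← fiber_eq_of_mem_fiberPartition hA hiA, fiber_eq_of_mem_fiberPartition hB hiB]
  · exact eq_univ_of_forall fun i =>
      mem_sup.mpr ⟨_, mem_fiberPartition.mpr ⟨i, rfl⟩, mem_fiber.mpr rfl⟩

theorem fiberPartition_comp_blockOf {κ : Type*} [DecidableEq κ] (hσ : IsSetPartition σ)
    (e : σ ↪ κ) : fiberPartition (e ∘ hσ.blockOf) = σ := by
  have hfiber : ∀ i, fiber (e ∘ hσ.blockOf) (e (hσ.blockOf i)) = (hσ.blockOf i).1 := fun i => by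
    ext j
    simp [← hσ.blockOf_eq_iff]
  ext A
  simp only [mem_fiberPartition, Function.comp_apply, hfiber]
  refine ⟨fun ⟨i, hi⟩ => hi ▸ (hσ.blockOf i).2, fun hA => ?_⟩
  obtain ⟨i, hi⟩ := hσ.nonempty hA
  exact ⟨i, congrArg Subtype.val (hσ.blockOf_eq_iff (A := ⟨A, hA⟩) |>.mpr hi)⟩

def fiberPartitionEquiv {κ : Type*} [DecidableEq κ] (hσ : IsSetPartition σ) :
    {f : Fin n → κ // fiberPartition f = σ} ≃ (σ ↪ κ) where
  toFun f := ⟨fun A => f.1 (A.1.min' (hσ.nonempty A.2)), fun A B hAB => Subtype.ext <| by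
    have hA : A.1 ∈ fiberPartition f.1 := by rw [f.2]; exact A.2
    have hB : B.1 ∈ fiberPartition f.1 := by rw [f.2]; exact B.2
    rw [← fiber_eq_of_mem_fiberPartition hA (min'_mem _ (hσ.nonempty A.2)),
      ← fiber_eq_of_mem_fiberPartition hB (min'_mem _ (hσ.nonempty B.2))]
    exact congrArg _ hAB⟩
  invFun e := ⟨e ∘ hσ.blockOf, fiberPartition_comp_blockOf hσ e⟩
  left_inv f := Subtype.ext <| funext fun i => by
    have hmem : (hσ.blockOf i).1 ∈ fiberPartition f.1 := by rw [f.2]; exact (hσ.blockOf i).2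
    have hblock := fiber_eq_of_mem_fiberPartition hmem (hσ.blockOf_eq_iff.mp rfl)
    show f.1 ((hσ.blockOf i).1.min' _) = f.1 i
    exact mem_fiber.mp (hblock.symm ▸ min'_mem _ _)
  right_inv e := by
    ext A
    simp [hσ.blockOf_eq_iff.mpr (min'_mem _ _)]

theorem card_filter_fiberPartition_eq {κ : Type*} [Fintype κ] [DecidableEq κ]
    (hσ : IsSetPartition σ) :
    #{f : Fin n → κ | fiberPartition f = σ} = (Fintype.card κ).descFactorial #σ := by
  rw [← Fintype.card_subtype, Fintype.card_congr (fiberPartitionEquiv hσ),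
    Fintype.card_embedding_eq, Fintype.card_coe]

theorem sum_prod_fiber {κ M : Type*} [Fintype κ] [DecidableEq κ] [CommSemiring M]
    (G : Finset (Fin n) → M) :
    ∑ f : Fin n → κ, ∏ s, G (fiber f s)
      = ∑ σ ∈ univ.filter (IsSetPartition (n := n)),
          (Fintype.card κ).descFactorial #σ * (G ∅ ^ (Fintype.card κ - #σ) * ∏ A ∈ σ, G A) := by
  rw [← sum_fiberwise_of_maps_to (g := fiberPartition) (t := univ.filter IsSetPartition)
    fun f _ => mem_filter.mpr ⟨mem_univ _, isSetPartition_fiberPartition f⟩]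
  refine sum_congr rfl fun σ hσ => ?_
  rw [sum_congr rfl fun f hf => (prod_fiber_eq f G).trans (by rw [(mem_filter.mp hf).2]),
    sum_const, card_filter_fiberPartition_eq (mem_filter.mp hσ).2, nsmul_eq_mul]

end SetPartitions

theorem trace_kronPow_mul_prod_emb {n d m : ℕ} (ρ : Matrix (Fin d) (Fin d) ℂ)
    (O : Fin n → Matrix (Fin d) (Fin d) ℂ) (f : Fin n → Fin m) :
    (kronPow ρ m * (List.ofFn fun i => emb (f i) (O i)).prod).trace
      = ∏ s, (ρ * orderedProd O (fiber f s)).trace := by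
  have hprod : (List.ofFn fun i => emb (f i) (O i)).prod
      = piKronecker (List.ofFn fun i => Pi.mulSingle (f i) (O i)).prod := by
    rw [map_list_prod, List.map_ofFn]
    simp only [Function.comp_def, emb_eq_piKronecker]
  rw [hprod, kronPow_eq_piKronecker, ← map_mul, trace_piKronecker]
  refine prod_congr rfl fun s _ => ?_
  rw [Pi.mul_apply, Pi.list_prod_apply, List.map_ofFn]
  simp only [Function.comp_def, Pi.mulSingle_apply, @eq_comm _ s, list_prod_ofFn_ite_one]
  rfl

theorem trace_kronPow_mul_prod_lamDeg {n d : ℕ} (ρ : Matrix (Fin d) (Fin d) ℂ)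
    (O : Fin n → Matrix (Fin d) (Fin d) ℂ) (m : ℕ) :
    (kronPow ρ m * (List.ofFn fun i => lamDeg m (O i)).prod).trace
      = ∑ σ ∈ univ.filter (IsSetPartition (n := n)), (m.descFactorial #σ : ℂ) *
          (ρ.trace ^ (m - #σ) * ∏ A ∈ σ, (ρ * orderedProd O A).trace) := by
  simp only [lamDeg, list_prod_ofFn_sum, mul_sum, Matrix.trace_sum, trace_kronPow_mul_prod_emb]
  rw [sum_prod_fiber fun A => (ρ * orderedProd O A).trace, Fintype.card_fin]
  simp [orderedProd]

section PoissonWeights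

variable {𝕂 : Type*}

theorem descFactorial_mul_pow_div_factorial_add [Field 𝕂] [CharZero 𝕂] (x : 𝕂) (k m : ℕ) :
    ((m + k).descFactorial k : 𝕂) * x ^ (m + k - k) / (m + k).factorial = x ^ m / m.factorial := by
  have hfac : ((m + k).factorial : 𝕂) = m.factorial * (m + k).descFactorial k := by
    rw [← Nat.factorial_mul_descFactorial (Nat.le_add_left k m), Nat.add_sub_cancel, Nat.cast_mul]
  have hdesc : ((m + k).descFactorial k : 𝕂) ≠ 0 :=
    Nat.cast_ne_zero.mpr (Nat.descFactorial_eq_zero_iff_lt.not.mpr (by omega))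
  have := Nat.cast_ne_zero (R := 𝕂) |>.mpr m.factorial_ne_zero
  rw [Nat.add_sub_cancel, hfac]
  field_simp

theorem summable_norm_descFactorial_mul_pow_div_factorial [NormedField 𝕂] [CharZero 𝕂]
    [NormedAlgebra ℚ 𝕂] (x : 𝕂) (k : ℕ) :
    Summable fun m : ℕ => ‖(m.descFactorial k : 𝕂) * x ^ (m - k) / m.factorial‖ := by
  rw [← summable_nat_add_iff k]
  simpa only [descFactorial_mul_pow_div_factorial_add] using
    NormedSpace.norm_expSeries_div_summable x

theorem hasSum_descFactorial_mul_pow_div_factorial [NormedField 𝕂] [CharZero 𝕂]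
    [NormedAlgebra ℚ 𝕂] [CompleteSpace 𝕂] (x : 𝕂) (k : ℕ) :
    HasSum (fun m : ℕ => (m.descFactorial k : 𝕂) * x ^ (m - k) / m.factorial)
      (NormedSpace.exp x) := by
  refine (hasSum_nat_add_iff' k).mp ?_
  rw [sum_eq_zero fun m hm => by simp [Nat.descFactorial_eq_zero_iff_lt.mpr (mem_range.mp hm)],
    sub_zero]
  simpa only [descFactorial_mul_pow_div_factorial_add] using
    NormedSpace.expSeries_div_hasSum_exp x

end PoissonWeights

theorem poisson_moment_formula_general (d n : ℕ)
    (ρ : Matrix (Fin d) (Fin d) ℂ)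
    (O : Fin n → Matrix (Fin d) (Fin d) ℂ) :
    (Summable fun m : ℕ => ‖(Complex.exp (-ρ.trace) / (m.factorial : ℂ)) *
        (kronPow ρ m * (List.ofFn fun i => lamDeg m (O i)).prod).trace‖) ∧
    HasSum
      (fun m : ℕ => (Complex.exp (-ρ.trace) / (m.factorial : ℂ)) *
        (kronPow ρ m * (List.ofFn fun i => lamDeg m (O i)).prod).trace)
      (∑ σ ∈ Finset.univ.filter (IsSetPartition (n := n)),
        ∏ A ∈ σ, (ρ * orderedProd O A).trace) := by
  set t := ρ.trace
  set C : Finset (Finset (Fin n)) → ℂ := fun σ => ∏ A ∈ σ, (ρ * orderedProd O A).trace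
  have hterm : ∀ m : ℕ, Complex.exp (-t) / m.factorial *
      (kronPow ρ m * (List.ofFn fun i => lamDeg m (O i)).prod).trace
        = ∑ σ ∈ univ.filter (IsSetPartition (n := n)),
            Complex.exp (-t) * C σ * ((m.descFactorial #σ : ℂ) * t ^ (m - #σ) / m.factorial) :=
    fun m => by
      rw [trace_kronPow_mul_prod_lamDeg, mul_sum]
      exact sum_congr rfl fun σ _ => by ring
  simp only [hterm]
  refine ⟨.of_nonneg_of_le (fun _ => norm_nonneg _) (fun _ => norm_sum_le _ _)
    (summable_sum fun σ _ => ?_), ?_⟩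
  · simpa only [norm_mul] using
      (summable_norm_descFactorial_mul_pow_div_factorial t #σ).mul_left ‖Complex.exp (-t) * C σ‖
  · have hweight : ∀ σ, Complex.exp (-t) * C σ * NormedSpace.exp t = C σ := fun σ => by
      rw [← Complex.exp_eq_exp_ℂ, mul_right_comm, ← Complex.exp_add, neg_add_cancel,
        Complex.exp_zero, one_mul]
    simpa only [hweight] using hasSum_sum fun σ (_ : σ ∈ univ.filter (IsSetPartition (n := n))) =>
      (hasSum_descFactorial_mul_pow_div_factorial t #σ).mul_left (Complex.exp (-t) * C σ)

/-- **The Poisson moment formula.**  For a Hermitian positive semidefinite `ρ` and matrices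
`O 0, …, O (n-1)`, the series `Σ_m (e^{-Tr ρ}/m!) Tr(ρ^{⊗m} λ_m(O 0) ⋯ λ_m(O (n-1)))`
converges absolutely, with sum `Σ_σ Π_{A ∈ σ} Tr(ρ · Π_{j ∈ A} O j)` over all set partitions
`σ` of `{0, …, n-1}`. -/
theorem poisson_moment_formula (d n : ℕ) (hd : 1 ≤ d) (hn : 1 ≤ n)
    (ρ : Matrix (Fin d) (Fin d) ℂ) (hρ : ρ.PosSemidef)
    (O : Fin n → Matrix (Fin d) (Fin d) ℂ) :
    (Summable fun m : ℕ => ‖(Complex.exp (-ρ.trace) / (m.factorial : ℂ)) *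
        (kronPow ρ m * (List.ofFn fun i => lamDeg m (O i)).prod).trace‖) ∧
    HasSum
      (fun m : ℕ => (Complex.exp (-ρ.trace) / (m.factorial : ℂ)) *
        (kronPow ρ m * (List.ofFn fun i => lamDeg m (O i)).prod).trace)
      (∑ σ ∈ Finset.univ.filter (IsSetPartition (n := n)),
        ∏ A ∈ σ, (ρ * orderedProd O A).trace) :=
  poisson_moment_formula_general d n ρ O

end
end Stmt0
end

section
/- Let d ≥ 1, N ≥ 0, and let O₁,…,O_n (n ≥ 1) be d×d complex matrices. Define λ_{∅,N} recursively by λ_{∅,N}(O₁) := λ_N(O₁) and λ_{∅,N}(O₁,O₂,…,O_n) := λ_N(O₁) · λ_{∅,N}(O₂,…,O_n) − Σ_{i=2}^n λ_{∅,N}(O₂,…,O_{i−1}, O₁O_i, O_{i+1},…,O_n). Then λ_{∅,N}(O₁,…,O_n) = Σ_j ∏_{i=1}^n emb_{j(i)}(O_i), where the sum runs over all injective maps j : {1,…,n} → {0,…,N−1} (the factors emb_{j(i)}(O_i) pairwise commute since the positions j(i) are distinct, so the product is unambiguous); in particular λ_{∅,N}(O₁,…,O_n) = 0 whenever N < n.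 -/
open scoped BigOperators

namespace Stmt3
noncomputable section

/-- `O` placed in the `j`-th tensor slot, identity elsewhere. -/
def emb {d N : ℕ} (j : Fin N) (O : Matrix (Fin d) (Fin d) ℂ) :
    Matrix (Fin N → Fin d) (Fin N → Fin d) ℂ :=
  Matrix.of fun f g =>
    O (f j) (g j) * ∏ l ∈ Finset.univ.erase j, (if f l = g l then (1 : ℂ) else 0)

/-- The `N`-th degree Poisson quantization map `λ_N(O) = Σ_{j<N} emb_j O`
(in particular `λ_0(O) = 0`). -/
def lamDeg {d : ℕ} (N : ℕ) (O : Matrix (Fin d) (Fin d) ℂ) :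
    Matrix (Fin N → Fin d) (Fin N → Fin d) ℂ :=
  ∑ j : Fin N, emb j O

/-- The vectors `λ_{∅,N}` defined by the recursion
`λ_{∅,N}(O₁) = λ_N(O₁)` and
`λ_{∅,N}(O₁,…,O_n) = λ_N(O₁)·λ_{∅,N}(O₂,…,O_n) − Σ_{i=2}^n λ_{∅,N}(O₂,…,O₁O_i,…,O_n)`
(with the convention that the empty tuple is sent to the identity, which makes the base case
of the recursion hold). -/
def lamEmpty {d : ℕ} (N : ℕ) :
    List (Matrix (Fin d) (Fin d) ℂ) → Matrix (Fin N → Fin d) (Fin N → Fin d) ℂ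
  | [] => 1
  | O :: rest =>
      lamDeg N O * lamEmpty N rest
        - ∑ i : Fin rest.length, lamEmpty N (rest.set i (O * rest.get i))
  termination_by l => l.length
  decreasing_by
  · simp
  · simp

variable {d N : ℕ}

lemma emb_apply (j : Fin N) (O : Matrix (Fin d) (Fin d) ℂ) (f g : Fin N → Fin d) :
    emb j O f g = O (f j) (g j) * (if ∀ l, l ≠ j → f l = g l then 1 else 0) := by
  unfold emb
  rw [Matrix.of_apply, Finset.prod_boole]
  congr 2
  simp [Finset.mem_erase]

lemma sum_update_eq (f : Fin N → Fin d) (j : Fin N) (F : (Fin N → Fin d) → ℂ)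
    (hF : ∀ h : Fin N → Fin d, ¬ (∀ l, l ≠ j → f l = h l) → F h = 0) :
    ∑ h : Fin N → Fin d, F h = ∑ x : Fin d, F (Function.update f j x) := by
  have hinj : Function.Injective (fun x => Function.update f j x) := by
    intro a b hab
    have := congrFun hab j
    simpa using this
  have h1 : ∑ x : Fin d, F (Function.update f j x)
      = ∑ h ∈ Finset.univ.image (fun x => Function.update f j x), F h :=
    (Finset.sum_image (fun a _ b _ h => hinj h)).symm
  rw [h1]
  apply (Finset.sum_subset (Finset.subset_univ _) _).symm
  intro h _ hmem
  apply hF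
  intro hcond
  apply hmem
  simp only [Finset.mem_image, Finset.mem_univ, true_and]
  refine ⟨h j, funext fun l => ?_⟩
  by_cases hl : l = j
  · subst hl; simp
  · simp [Function.update_apply, hl, hcond l hl]


lemma emb_mul_same (j : Fin N) (A B : Matrix (Fin d) (Fin d) ℂ) :
    emb j A * emb j B = emb j (A * B) := by
  ext f g
  rw [Matrix.mul_apply]
  simp only [emb_apply]
  rw [sum_update_eq f j _ (by
    intro h hh
    simp [hh])]
  rw [Matrix.mul_apply, Finset.sum_mul]
  apply Finset.sum_congr rfl
  intro x _
  have h1 : (∀ l, l ≠ j → f l = Function.update f j x l) := by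
    intro l hl; simp [Function.update_apply, hl]
  have h2 : (∀ l, l ≠ j → Function.update f j x l = g l) ↔ (∀ l, l ≠ j → f l = g l) := by
    constructor <;> intro h l hl <;> have := h l hl <;>
      simpa [Function.update_apply, hl] using this
  rw [if_pos h1, if_congr h2 rfl rfl]
  simp only [Function.update_self]
  ring

lemma emb_mul_ne (j k : Fin N) (hjk : j ≠ k) (A B : Matrix (Fin d) (Fin d) ℂ)
    (f g : Fin N → Fin d) :
    (emb j A * emb k B) f g
      = A (f j) (g j) * B (f k) (g k) *
        (if ∀ l, l ≠ j → l ≠ k → f l = g l then 1 else 0) := by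
  rw [Matrix.mul_apply]
  simp only [emb_apply]
  rw [sum_update_eq f j _ (by
    intro h hh
    simp [hh])]
  have key : ∀ x : Fin d,
      (∀ l, l ≠ k → Function.update f j x l = g l)
        ↔ (x = g j ∧ ∀ l, l ≠ j → l ≠ k → f l = g l) := by
    intro x
    constructor
    · intro h
      refine ⟨by simpa using h j hjk, fun l hlj hlk => ?_⟩
      have := h l hlk
      simpa [Function.update_apply, hlj] using this
    · rintro ⟨hx, hC⟩ l hlk
      by_cases hlj : l = j
      · subst hlj; simpa using hx
      · simpa [Function.update_apply, hlj] using hC l hlj hlk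
  have h1 : ∀ x : Fin d, (∀ l, l ≠ j → f l = Function.update f j x l) := by
    intro x l hl; simp [Function.update_apply, hl]
  rw [Finset.sum_eq_single (g j)]
  · rw [if_pos (h1 _), if_congr (key (g j)) rfl rfl]
    by_cases hC : ∀ l, l ≠ j → l ≠ k → f l = g l
    · simp only [hC, and_true, if_pos rfl, if_pos trivial, eq_self_iff_true,
        Function.update_self, Function.update_of_ne (Ne.symm hjk)]
      simp [hC]
    · simp only [hC, and_false, if_false, if_neg hC]
      ring
  · intro x _ hx
    rw [if_pos (h1 x), if_congr (key x) rfl rfl, if_neg (fun hc => hx hc.1)]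
    ring
  · simp

lemma emb_comm {j k : Fin N} (hjk : j ≠ k) (A B : Matrix (Fin d) (Fin d) ℂ) :
    emb j A * emb k B = emb k B * emb j A := by
  ext f g
  rw [emb_mul_ne j k hjk, emb_mul_ne k j hjk.symm]
  have : (∀ l, l ≠ k → l ≠ j → f l = g l) ↔ (∀ l, l ≠ j → l ≠ k → f l = g l) :=
    ⟨fun h l h1 h2 => h l h2 h1, fun h l h1 h2 => h l h2 h1⟩
  rw [if_congr this rfl rfl]
  ring


lemma mul_ofFn_prod {M : Type*} [Monoid M] :
    ∀ {m : ℕ} (g : Fin m → M) (i : Fin m) (X : M),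
      (∀ i', i' ≠ i → X * g i' = g i' * X) →
      X * (List.ofFn g).prod = (List.ofFn (Function.update g i (X * g i))).prod := by
  intro m
  induction m with
  | zero => exact fun g i => i.elim0
  | succ m ih =>
    intro g i X hcomm
    rcases Fin.eq_zero_or_eq_succ i with hi | ⟨i', hi⟩
    · subst hi
      have h0 : Function.update g 0 (X * g 0) 0 = X * g 0 := by simp
      have hs : (fun l : Fin m => Function.update g 0 (X * g 0) l.succ)
          = fun l => g l.succ := by
        funext l; simp [Function.update_apply, Fin.succ_ne_zero]
      rw [List.ofFn_succ, List.ofFn_succ, List.prod_cons, List.prod_cons, ← mul_assoc,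
        h0, hs]
    · subst hi
      have h0 : Function.update g i'.succ (X * g i'.succ) 0 = g 0 :=
        Function.update_of_ne (Ne.symm (Fin.succ_ne_zero i')) _ _
      have hs : (fun l : Fin m => Function.update g i'.succ (X * g i'.succ) l.succ)
          = Function.update (fun l => g l.succ) i' (X * g i'.succ) := by
        funext l
        by_cases hl : l = i'
        · subst hl; simp
        · rw [Function.update_of_ne (by simpa [Fin.succ_inj] using hl),
            Function.update_of_ne hl]
      rw [List.ofFn_succ, List.ofFn_succ, List.prod_cons, List.prod_cons, ← mul_assoc,
        hcomm 0 (Ne.symm (Fin.succ_ne_zero i')), mul_assoc,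
        ih (fun l => g l.succ) i' X
          (fun l hl => hcomm l.succ (by simp [Fin.succ_inj, hl])),
        h0, hs]

lemma ofFn_set {α : Type*} {m : ℕ} (f : Fin m → α) (i : Fin (List.ofFn f).length) (a : α) :
    (List.ofFn f).set i a = List.ofFn (Function.update f (Fin.cast (by simp) i) a) := by
  apply List.ext_getElem
  · simp
  · intro k h1 h2
    simp only [List.getElem_set, List.getElem_ofFn, Function.update_apply]
    have : (⟨k, by simpa using h2⟩ : Fin m) = Fin.cast (by simp) i ↔ (i : ℕ) = k := by
      simp [Fin.ext_iff, eq_comm]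
    rw [if_congr this rfl rfl]


def S {d N : ℕ} {n : ℕ} (O : Fin n → Matrix (Fin d) (Fin d) ℂ) :
    Matrix (Fin N → Fin d) (Fin N → Fin d) ℂ :=
  ∑ j ∈ Finset.univ.filter (fun j : Fin n → Fin N => Function.Injective j),
    (List.ofFn fun i => emb (j i) (O i)).prod

lemma step {m : ℕ} (A : Matrix (Fin d) (Fin d) ℂ) (O : Fin m → Matrix (Fin d) (Fin d) ℂ) :
    lamDeg N A * S (N := N) O
      = S (N := N) (Fin.cons A O)
        + ∑ i : Fin m, S (N := N) (Function.update O i (A * O i)) := by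
  classical
  have expand : lamDeg N A * S (N := N) O
      = ∑ j ∈ Finset.univ.filter (fun j : Fin m → Fin N => Function.Injective j),
          ∑ k : Fin N, emb k A * (List.ofFn fun i => emb (j i) (O i)).prod := by
    rw [S, Finset.mul_sum]
    refine Finset.sum_congr rfl fun j _ => ?_
    rw [lamDeg, Finset.sum_mul]
  rw [expand]
  have split : ∀ j ∈ Finset.univ.filter (fun j : Fin m → Fin N => Function.Injective j),
      ∑ k : Fin N, emb k A * (List.ofFn fun i => emb (j i) (O i)).prod
        = (∑ k ∈ Finset.univ.filter (¬ · ∈ Finset.univ.image j),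
            emb k A * (List.ofFn fun i => emb (j i) (O i)).prod)
          + ∑ i : Fin m, (List.ofFn fun i' => emb (j i')
              (Function.update O i (A * O i) i')).prod := by
    intro j hj
    have hjinj : Function.Injective j := by simpa using hj
    rw [← Finset.sum_filter_add_sum_filter_not Finset.univ (· ∈ Finset.univ.image j)
      (fun k => emb k A * (List.ofFn fun i => emb (j i) (O i)).prod), add_comm]
    congr 1
    rw [Finset.filter_univ_mem, Finset.sum_image (fun a _ b _ h => hjinj h)]
    refine Finset.sum_congr rfl fun i _ => ?_
    rw [mul_ofFn_prod (fun i' => emb (j i') (O i')) i (emb (j i) A)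
      (fun i' hi' => emb_comm (fun h => hi' (hjinj h).symm) A (O i'))]
    refine congrArg (fun l => List.prod l) (congrArg List.ofFn (funext fun i' => ?_))
    by_cases h : i' = i
    · subst h; rw [Function.update_self, Function.update_self, emb_mul_same]
    · rw [Function.update_of_ne h, Function.update_of_ne h]
  rw [Finset.sum_congr rfl split, Finset.sum_add_distrib]
  congr 1
  swap
  · rw [Finset.sum_comm]
    rfl
  -- remaining : ∑_j ∑_{k ∉ image j} = S (cons A O)
  rw [Finset.sum_sigma']
  rw [S]
  refine Finset.sum_nbij' (i := fun p => Fin.cons p.2 p.1)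
    (j := fun q => ⟨fun l => q l.succ, q 0⟩) ?_ ?_ ?_ ?_ ?_
  · rintro ⟨j, k⟩ hp
    simp only [Finset.mem_sigma, Finset.mem_filter, Finset.mem_univ, true_and,
      Finset.mem_image, not_exists] at hp ⊢
    rw [Fin.cons_injective_iff]
    refine ⟨?_, hp.1⟩
    rintro ⟨i, hi⟩
    exact hp.2 i hi
  · intro q hq
    simp only [Finset.mem_filter, Finset.mem_univ, true_and] at hq
    simp only [Finset.mem_sigma, Finset.mem_filter, Finset.mem_univ, true_and,
      Finset.mem_image, not_exists]
    constructor
    · intro a b hab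
      exact Fin.succ_injective _ (hq hab)
    · intro i hi
      exact (Fin.succ_ne_zero i) (hq hi)
  · rintro ⟨j, k⟩ _
    ext
    · rfl
    · simp [Fin.cons_succ]
  · intro q _
    funext l
    rcases Fin.eq_zero_or_eq_succ l with hl | ⟨l', hl⟩ <;> subst hl <;> simp
  · rintro ⟨j, k⟩ _
    rw [List.ofFn_succ, List.prod_cons]
    simp [Fin.cons_zero, Fin.cons_succ]


lemma lamEmpty_ofFn_succ {m : ℕ} (O : Fin (m + 1) → Matrix (Fin d) (Fin d) ℂ) :
    lamEmpty N (List.ofFn O)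
      = lamDeg N (O 0) * lamEmpty N (List.ofFn (Fin.tail O))
        - ∑ i : Fin m, lamEmpty N (List.ofFn (Function.update (Fin.tail O) i
            (O 0 * Fin.tail O i))) := by
  rw [List.ofFn_succ, lamEmpty]
  congr 1
  refine Fintype.sum_equiv
    (finCongr (by simp : (List.ofFn fun i => O i.succ).length = m)) _ _ fun i => ?_
  rw [List.get_ofFn, ofFn_set]
  rfl

lemma lamEmpty_ofFn_eq (n : ℕ) (O : Fin n → Matrix (Fin d) (Fin d) ℂ) :
    lamEmpty N (List.ofFn O) = S (N := N) O := by
  induction n with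
  | zero =>
    rw [List.ofFn_zero, lamEmpty, S]
    rw [Finset.filter_true_of_mem
      (fun j _ => Function.injective_of_subsingleton j)]
    simp
  | succ m ih =>
    rw [lamEmpty_ofFn_succ, ih (Fin.tail O)]
    have hupd : ∀ i : Fin m,
        lamEmpty N (List.ofFn (Function.update (Fin.tail O) i (O 0 * Fin.tail O i)))
          = S (N := N) (Function.update (Fin.tail O) i (O 0 * Fin.tail O i)) :=
      fun i => ih _
    rw [Finset.sum_congr rfl fun i _ => hupd i, step (O 0) (Fin.tail O),
      add_sub_cancel_right, Fin.cons_self_tail]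


/-- The recursively defined `λ_{∅,N}(O₁,…,O_n)` equals the sum, over all injective maps
`j : Fin n → Fin N`, of the product `Π_i emb_{j i}(O i)`; in particular it vanishes
whenever `N < n`. -/
theorem lamEmpty_eq_sum_injective (d N n : ℕ) (hd : 1 ≤ d) (hn : 1 ≤ n)
    (O : Fin n → Matrix (Fin d) (Fin d) ℂ) :
    lamEmpty N (List.ofFn O)
        = ∑ j ∈ Finset.univ.filter (fun j : Fin n → Fin N => Function.Injective j),
            (List.ofFn fun i => emb (j i) (O i)).prod ∧
    (N < n → lamEmpty N (List.ofFn O) = 0) := by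
  have h1 : lamEmpty N (List.ofFn O)
      = ∑ j ∈ Finset.univ.filter (fun j : Fin n → Fin N => Function.Injective j),
          (List.ofFn fun i => emb (j i) (O i)).prod := lamEmpty_ofFn_eq n O
  refine ⟨h1, fun hNn => ?_⟩
  rw [h1]
  have hempty : Finset.univ.filter (fun j : Fin n → Fin N => Function.Injective j) = ∅ := by
    rw [Finset.filter_eq_empty_iff]
    intro j _ hj
    have := Fintype.card_le_of_injective j hj
    simp only [Fintype.card_fin] at this
    omega
  rw [hempty, Finset.sum_empty]


end
end Stmt3
end

section
/- Let d ≥ 1, let ρ be a Hermitian positive semidefinite d×d complex matrix, and let O₁,…,O_n and Õ₁,…,Õ_m be d×d complex matrices satisfying Tr(ρ O_i) = 0 for all i and Tr(ρ Õ_l) = 0 for all l. Then Σ_{N≥0} (exp(−Tr ρ)/N!) · Tr(ρ^{⊗N} · (λ_{∅,N}(Õ₁,…,Õ_m))^* · λ_{∅,N}(O₁,…,O_n)) = δ_{n,m} · Σ_{π∈S_n} ∏_{i=1}^n Tr(ρ · Õ_i^* · O_{π(i)}), where ^* denotes conjugate transpose and S_n is the symmetric group on {1,…,n}. (This orthogonality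 shows that the vectors λ_∅(O₁,…,O_n) applied to the Poisson state vector form a basis exhibiting the GNS Hilbert space of the Poisson state as a symmetric Fock space.) -/
/-!
Write `ρ^{⊗N}`, each `emb_j O` and hence each term of `λ_{∅,N}` as a Kronecker product of `N`
single-site matrices; the term of `λ_{∅,N}(O)` indexed by an injective `j` carries
`Function.extend j O 1` (`O i` in slot `j i`, identity elsewhere). The trace
`Tr(ρ^{⊗N} λ(Õ)^* λ(O))` is then a sum over pairs `(k, j)` of injective slot assignments of
products of single-site traces. A slot used by only one of `k`, `j` contributes
`Tr(ρ Õ_l^*) = conj Tr(ρ Õ_l) = 0` or `Tr(ρ O_i) = 0`, so only pairs with equal ranges survive: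
`n = m` and `j = k ∘ σ` with `σ ∈ S_n`, while each of the `N - n` free slots contributes `Tr ρ`.
Summing over the `N!/(N-n)!` choices of `k` leaves the Poisson weights
`e^{-Tr ρ} (Tr ρ)^{N-n} / (N-n)!`, which sum to `1`.
-/

open scoped BigOperators ComplexOrder Matrix

namespace Stmt4
noncomputable section

/-- `N`-fold Kronecker tensor power of a `d × d` matrix. -/
def kronPow {d : ℕ} (ρ : Matrix (Fin d) (Fin d) ℂ) (N : ℕ) :
    Matrix (Fin N → Fin d) (Fin N → Fin d) ℂ :=
  Matrix.of fun f g => ∏ l : Fin N, ρ (f l) (g l)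

/-- `O` placed in the `j`-th tensor slot, identity elsewhere. -/
def emb {d N : ℕ} (j : Fin N) (O : Matrix (Fin d) (Fin d) ℂ) :
    Matrix (Fin N → Fin d) (Fin N → Fin d) ℂ :=
  Matrix.of fun f g =>
    O (f j) (g j) * ∏ l ∈ Finset.univ.erase j, (if f l = g l then (1 : ℂ) else 0)

/-- The `N`-th degree Poisson quantization map. -/
def lamDeg {d : ℕ} (N : ℕ) (O : Matrix (Fin d) (Fin d) ℂ) :
    Matrix (Fin N → Fin d) (Fin N → Fin d) ℂ :=
  ∑ j : Fin N, emb j O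

/-- `λ_{∅,N}(O₁,…,O_n) = Σ_j Π_i emb_{j i}(O_i)`, where `j` runs over injective maps;
equivalently it is given by the recursion
`λ_{∅,N}(O₁,…,O_n) = λ_N(O₁)λ_{∅,N}(O₂,…,O_n) − Σ_{i≥2} λ_{∅,N}(O₂,…,O₁O_i,…,O_n)`. -/
def lamEmpty {d N n : ℕ} (O : Fin n → Matrix (Fin d) (Fin d) ℂ) :
    Matrix (Fin N → Fin d) (Fin N → Fin d) ℂ :=
  ∑ j ∈ Finset.univ.filter (fun j : Fin n → Fin N => Function.Injective j),
    (List.ofFn fun i => emb (j i) (O i)).prod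

open Function

section PiKronecker

variable {ι κ R : Type*} [Fintype ι] [CommSemiring R]

def piKronecker (A : ι → Matrix κ κ R) : Matrix (ι → κ) (ι → κ) R :=
  Matrix.of fun f g => ∏ l, A l (f l) (g l)

@[simp]
lemma piKronecker_apply (A : ι → Matrix κ κ R) (f g : ι → κ) :
    piKronecker A f g = ∏ l, A l (f l) (g l) := rfl

lemma piKronecker_one [DecidableEq κ] : piKronecker (fun _ : ι => (1 : Matrix κ κ R)) = 1 := by
  ext f g
  rw [piKronecker_apply, Matrix.one_apply]
  split_ifs with h
  · simp [h, Matrix.one_apply]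
  · obtain ⟨l, hl⟩ := ne_iff.mp h
    exact Finset.prod_eq_zero (Finset.mem_univ l) (by simp [hl])

lemma piKronecker_mul [DecidableEq ι] [Fintype κ] (A B : ι → Matrix κ κ R) :
    piKronecker (A * B) = piKronecker A * piKronecker B := by
  ext f g
  simp only [piKronecker_apply, Pi.mul_apply, Matrix.mul_apply, ← Finset.prod_mul_distrib]
  exact Fintype.prod_sum fun l x => A l (f l) x * B l x (g l)

def piKroneckerHom [DecidableEq ι] [Fintype κ] [DecidableEq κ] :
    (ι → Matrix κ κ R) →* Matrix (ι → κ) (ι → κ) R where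
  toFun := piKronecker
  map_one' := piKronecker_one
  map_mul' := piKronecker_mul

lemma trace_piKronecker [DecidableEq ι] [Fintype κ] (A : ι → Matrix κ κ R) :
    (piKronecker A).trace = ∏ l, (A l).trace := by
  simp only [Matrix.trace, Matrix.diag, piKronecker_apply]
  exact (Fintype.prod_sum fun l x => A l x x).symm

lemma conjTranspose_piKronecker [StarRing R] (A : ι → Matrix κ κ R) :
    (piKronecker A)ᴴ = piKronecker fun l => (A l)ᴴ := by
  ext f g
  simp [Matrix.conjTranspose_apply]

end PiKronecker

lemma list_prod_ofFn_mulSingle_eq_extend {ι M : Type*} [DecidableEq ι] [Monoid M] :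
    ∀ {n : ℕ} {j : Fin n → ι}, Injective j → ∀ O : Fin n → M,
      (List.ofFn fun i => Pi.mulSingle (j i) (O i)).prod = extend j O 1
  | 0, j, _, O => by
    ext s
    rw [extend_apply' _ _ _ (by simp)]
    simp
  | n + 1, j, hj, O => by
    rw [List.ofFn_succ, List.prod_cons,
      list_prod_ofFn_mulSingle_eq_extend (j := fun i => j i.succ) (hj.comp (Fin.succ_injective n))]
    ext s
    rw [Pi.mul_apply]
    by_cases hs : ∃ i, j i = s
    · obtain ⟨i, rfl⟩ := hs
      rw [hj.extend_apply]
      cases i using Fin.cases with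
      | zero =>
        rw [Pi.mulSingle_eq_same, extend_apply', Pi.one_apply, mul_one]
        rintro ⟨i, hi⟩
        exact Fin.succ_ne_zero i (hj hi)
      | succ i =>
        rw [Pi.mulSingle_eq_of_ne (hj.ne (Fin.succ_ne_zero i)), one_mul]
        exact (hj.comp (Fin.succ_injective n)).extend_apply _ _ i
    · rw [extend_apply' _ _ _ hs, extend_apply', Pi.one_apply, mul_one,
        Pi.mulSingle_eq_of_ne]
      · exact fun h => hs ⟨0, h.symm⟩
      · exact fun ⟨i, hi⟩ => hs ⟨i.succ, hi⟩

lemma kronPow_eq_piKronecker {d N : ℕ} (ρ : Matrix (Fin d) (Fin d) ℂ) :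
    kronPow ρ N = piKronecker fun _ => ρ := rfl

lemma emb_eq_piKronecker_mulSingle {d N : ℕ} (j : Fin N) (O : Matrix (Fin d) (Fin d) ℂ) :
    emb j O = piKronecker (Pi.mulSingle j O) := by
  ext f g
  rw [piKronecker_apply, ← Finset.mul_prod_erase _ _ (Finset.mem_univ j)]
  simp only [emb, Matrix.of_apply, Pi.mulSingle_eq_same]
  congr 1
  refine Finset.prod_congr rfl fun l hl => ?_
  rw [Pi.mulSingle_eq_of_ne (Finset.ne_of_mem_erase hl), Matrix.one_apply]

lemma lamEmpty_eq_sum_piKronecker {d N n : ℕ} (O : Fin n → Matrix (Fin d) (Fin d) ℂ) :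
    lamEmpty (N := N) O
      = ∑ j ∈ Finset.univ.filter (fun j : Fin n → Fin N => Injective j),
          piKronecker (extend j O 1) := by
  refine Finset.sum_congr rfl fun j hj => ?_
  rw [← list_prod_ofFn_mulSingle_eq_extend (Finset.mem_filter.mp hj).2]
  change _ = piKroneckerHom _
  rw [map_list_prod, List.map_ofFn]
  simp_rw [emb_eq_piKronecker_mulSingle]
  rfl

lemma _root_.Matrix.IsHermitian.trace_mul_conjTranspose {κ R : Type*} [Fintype κ]
    [CommSemiring R] [StarRing R] {ρ : Matrix κ κ R} (hρ : ρ.IsHermitian) (A : Matrix κ κ R) :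
    (ρ * Aᴴ).trace = star (ρ * A).trace := by
  rw [← Matrix.trace_conjTranspose, Matrix.conjTranspose_mul, hρ.eq, Matrix.trace_mul_comm]

lemma extend_comp_perm {α ι γ : Type*} {k : α → ι} (hk : Injective k) (σ : Equiv.Perm α)
    (B : α → γ) (e : ι → γ) : extend (k ∘ σ) B e = extend k (B ∘ σ.symm) e := by
  rw [Injective.extend_comp σ.injective hk]
  exact congrArg (extend k · e) (funext (Equiv.extend_apply B (e ∘ k)))

section Pairing

variable {α β ι κ R : Type*} [Fintype ι] [Fintype κ] [DecidableEq κ]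
  [CommSemiring R] [StarRing R] {ρ : Matrix κ κ R}

lemma prod_trace_extend_eq_zero_of_range_ne (hρ : ρ.IsHermitian) {A : α → Matrix κ κ R}
    {B : β → Matrix κ κ R} (hA : ∀ a, (ρ * A a).trace = 0) (hB : ∀ b, (ρ * B b).trace = 0)
    {k : α → ι} {j : β → ι} (hk : Injective k) (hj : Injective j)
    (hne : Set.range k ≠ Set.range j) :
    ∏ s, (ρ * (extend k A 1 s)ᴴ * extend j B 1 s).trace = 0 := by
  obtain ⟨s, hs⟩ : ∃ s, ¬(s ∈ Set.range k ↔ s ∈ Set.range j) :=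
    not_forall.mp (mt Set.ext hne)
  refine Finset.prod_eq_zero (Finset.mem_univ s) ?_
  by_cases hsk : s ∈ Set.range k
  · obtain ⟨a, rfl⟩ := hsk
    rw [hk.extend_apply, extend_apply' _ _ _ fun hsj => hs ⟨fun _ => hsj, fun _ => ⟨a, rfl⟩⟩,
      Pi.one_apply, mul_one, hρ.trace_mul_conjTranspose, hA a, star_zero]
  · obtain ⟨b, rfl⟩ := (not_iff.mp hs).mp hsk
    rw [hj.extend_apply, extend_apply' _ _ _ hsk, Pi.one_apply, Matrix.conjTranspose_one,
      mul_one, hB b]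

lemma prod_trace_extend_self [DecidableEq ι] [Fintype α] {k : α → ι} (hk : Injective k)
    (A B : α → Matrix κ κ R) :
    ∏ s, (ρ * (extend k A 1 s)ᴴ * extend k B 1 s).trace
      = ρ.trace ^ (Fintype.card ι - Fintype.card α) * ∏ a, (ρ * (A a)ᴴ * B a).trace := by
  rw [← Finset.prod_mul_prod_compl (Finset.univ.image k), Finset.prod_image hk.injOn, mul_comm]
  congr 1
  · rw [Finset.prod_congr rfl fun s hs => ?_, Finset.prod_const, Finset.card_compl,
      Finset.card_image_of_injective _ hk, Finset.card_univ]
    have hsk : ¬∃ a, k a = s := by simpa using hs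
    rw [extend_apply' _ _ _ hsk, extend_apply' _ _ _ hsk, Pi.one_apply, Matrix.conjTranspose_one,
      mul_one, mul_one]
  · exact Finset.prod_congr rfl fun a _ => by rw [hk.extend_apply, hk.extend_apply]

end Pairing

section InjectiveMaps

variable {α ι : Type*} [Fintype α] [DecidableEq α] [Fintype ι] [DecidableEq ι]

lemma card_filter_injective :
    (Finset.univ.filter fun j : α → ι => Injective j).card
      = (Fintype.card ι).descFactorial (Fintype.card α) := by
  rw [← Fintype.card_subtype, Fintype.card_congr (Equiv.subtypeInjectiveEquivEmbedding α ι),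
    Fintype.card_embedding_eq]

lemma sum_filter_injective_eq_sum_perm {M : Type*} [AddCommMonoid M] {k : α → ι}
    (hk : Injective k) {F : (α → ι) → M}
    (hF : ∀ j, Injective j → Set.range k ≠ Set.range j → F j = 0) :
    ∑ j ∈ Finset.univ.filter (fun j : α → ι => Injective j), F j
      = ∑ σ : Equiv.Perm α, F (k ∘ σ) := by
  rw [← Finset.sum_image (s := Finset.univ) (g := fun σ : Equiv.Perm α => k ∘ σ)
    fun σ _ τ _ h => Equiv.ext fun a => hk (congrFun h a)]
  symm
  refine Finset.sum_subset ?_ fun j hj hjk => ?_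
  · intro j hj
    obtain ⟨σ, -, rfl⟩ := Finset.mem_image.mp hj
    exact Finset.mem_filter.mpr ⟨Finset.mem_univ _, hk.comp σ.injective⟩
  · have hjinj := (Finset.mem_filter.mp hj).2
    refine hF j hjinj fun hrange => hjk ?_
    choose τ hτ using fun a => (hrange ▸ Set.mem_range_self a : j a ∈ Set.range k)
    have hτinj : Injective τ := fun a b h => hjinj (by rw [← hτ a, ← hτ b, h])
    exact Finset.mem_image.mpr
      ⟨Equiv.ofBijective τ hτinj.bijective_of_finite, Finset.mem_univ _, funext hτ⟩

end InjectiveMaps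

open Nat in
lemma hasSum_exp_neg_div_factorial_mul_descFactorial (t : ℂ) (n : ℕ) :
    HasSum (fun N : ℕ => Complex.exp (-t) / N ! * (N.descFactorial n * t ^ (N - n))) 1 := by
  have hlow :
      ∑ N ∈ Finset.range n, Complex.exp (-t) / N ! * (N.descFactorial n * t ^ (N - n)) = 0 :=
    Finset.sum_eq_zero fun N hN => by
      rw [Nat.descFactorial_eq_zero_iff_lt.mpr (Finset.mem_range.mp hN)]
      simp
  rw [← hasSum_nat_add_iff' n, hlow, sub_zero]
  have hexp := (NormedSpace.expSeries_div_hasSum_exp t).mul_left (Complex.exp (-t))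
  rw [← Complex.exp_eq_exp_ℂ, ← Complex.exp_add, neg_add_cancel, Complex.exp_zero] at hexp
  have hterm : ∀ M : ℕ,
      Complex.exp (-t) / (M + n)! * ((M + n).descFactorial n * t ^ (M + n - n))
        = Complex.exp (-t) * (t ^ M / M !) := fun M => by
    have hfact := Nat.factorial_mul_descFactorial (Nat.le_add_left n M)
    rw [Nat.add_sub_cancel] at hfact
    have hdesc : ((M + n).descFactorial n : ℂ) ≠ 0 := by
      exact_mod_cast (Nat.descFactorial_pos.mpr (Nat.le_add_left n M)).ne'
    rw [Nat.add_sub_cancel, ← hfact]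
    push_cast
    field_simp
  simpa only [hterm] using hexp

section Trace

variable {d N : ℕ} (ρ : Matrix (Fin d) (Fin d) ℂ)

lemma trace_kronPow_mul_lamEmpty_eq_sum {n m : ℕ} (O : Fin n → Matrix (Fin d) (Fin d) ℂ)
    (Ot : Fin m → Matrix (Fin d) (Fin d) ℂ) :
    (kronPow ρ N * (lamEmpty (N := N) Ot)ᴴ * lamEmpty (N := N) O).trace
      = ∑ k ∈ Finset.univ.filter (fun k : Fin m → Fin N => Injective k),
        ∑ j ∈ Finset.univ.filter (fun j : Fin n → Fin N => Injective j),
          ∏ s, (ρ * (extend k Ot 1 s)ᴴ * extend j O 1 s).trace := by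
  simp only [lamEmpty_eq_sum_piKronecker, kronPow_eq_piKronecker, Matrix.conjTranspose_sum,
    Finset.mul_sum, Finset.sum_mul, Matrix.trace_sum, conjTranspose_piKronecker,
    ← piKronecker_mul, trace_piKronecker, Pi.mul_apply]
  exact Finset.sum_comm

variable {ρ}

lemma trace_kronPow_mul_lamEmpty_of_ne (hρ : ρ.IsHermitian) {n m : ℕ} (hnm : n ≠ m)
    {O : Fin n → Matrix (Fin d) (Fin d) ℂ} {Ot : Fin m → Matrix (Fin d) (Fin d) ℂ}
    (hO : ∀ i, (ρ * O i).trace = 0) (hOt : ∀ l, (ρ * Ot l).trace = 0) :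
    (kronPow ρ N * (lamEmpty (N := N) Ot)ᴴ * lamEmpty (N := N) O).trace = 0 := by
  rw [trace_kronPow_mul_lamEmpty_eq_sum]
  refine Finset.sum_eq_zero fun k hk => Finset.sum_eq_zero fun j hj => ?_
  have hk := (Finset.mem_filter.mp hk).2
  have hj := (Finset.mem_filter.mp hj).2
  refine prod_trace_extend_eq_zero_of_range_ne hρ hOt hO hk hj fun hrange => hnm ?_
  simpa [Set.ncard_range_of_injective hk, Set.ncard_range_of_injective hj] using
    congrArg Set.ncard hrange.symm

lemma trace_kronPow_mul_lamEmpty_self (hρ : ρ.IsHermitian) {n : ℕ}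
    {O Ot : Fin n → Matrix (Fin d) (Fin d) ℂ}
    (hO : ∀ i, (ρ * O i).trace = 0) (hOt : ∀ l, (ρ * Ot l).trace = 0) :
    (kronPow ρ N * (lamEmpty (N := N) Ot)ᴴ * lamEmpty (N := N) O).trace
      = N.descFactorial n * ρ.trace ^ (N - n) *
        ∑ π : Equiv.Perm (Fin n), ∏ i, (ρ * (Ot i)ᴴ * O (π i)).trace := by
  have hinner : ∀ k ∈ Finset.univ.filter (fun k : Fin n → Fin N => Injective k),
      ∑ j ∈ Finset.univ.filter (fun j : Fin n → Fin N => Injective j),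
        ∏ s, (ρ * (extend k Ot 1 s)ᴴ * extend j O 1 s).trace
      = ρ.trace ^ (N - n) * ∑ π : Equiv.Perm (Fin n), ∏ i, (ρ * (Ot i)ᴴ * O (π i)).trace := by
    intro k hk
    have hk := (Finset.mem_filter.mp hk).2
    rw [sum_filter_injective_eq_sum_perm hk fun j hj hne =>
      prod_trace_extend_eq_zero_of_range_ne hρ hOt hO hk hj hne]
    simp only [extend_comp_perm hk, prod_trace_extend_self hk, Fintype.card_fin, ← Finset.mul_sum]
    exact congrArg _ (Fintype.sum_equiv (Equiv.inv _) _ _ fun σ => rfl)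
  rw [trace_kronPow_mul_lamEmpty_eq_sum, Finset.sum_congr rfl hinner, Finset.sum_const,
    card_filter_injective, Fintype.card_fin, Fintype.card_fin, nsmul_eq_mul, mul_assoc]

end Trace

theorem lamEmpty_orthogonality_general (d n m : ℕ)
    (ρ : Matrix (Fin d) (Fin d) ℂ) (hρ : ρ.PosSemidef)
    (O : Fin n → Matrix (Fin d) (Fin d) ℂ) (Ot : Fin m → Matrix (Fin d) (Fin d) ℂ)
    (hO : ∀ i, (ρ * O i).trace = 0) (hOt : ∀ l, (ρ * Ot l).trace = 0) :
    HasSum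
      (fun N : ℕ => (Complex.exp (-ρ.trace) / (N.factorial : ℂ)) *
        (kronPow ρ N * (lamEmpty (N := N) Ot)ᴴ * lamEmpty (N := N) O).trace)
      (if h : n = m then
        ∑ π : Equiv.Perm (Fin n), ∏ i : Fin n,
          (ρ * (Ot (Fin.cast h i))ᴴ * O (π i)).trace
       else 0) := by
  rcases eq_or_ne n m with rfl | hnm
  · simp only [dif_pos, Fin.cast_eq_self, trace_kronPow_mul_lamEmpty_self hρ.1 hO hOt]
    simpa only [mul_assoc, one_mul] using
      (hasSum_exp_neg_div_factorial_mul_descFactorial ρ.trace n).mul_right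
        (∑ π : Equiv.Perm (Fin n), ∏ i, (ρ * (Ot i)ᴴ * O (π i)).trace)
  · simp only [dif_neg hnm, trace_kronPow_mul_lamEmpty_of_ne hρ.1 hnm hO hOt, mul_zero]
    exact hasSum_zero

/-- Orthogonality of the `λ_∅` vectors in the Poisson state: for one-point-removed operators
(`Tr(ρ O_i) = 0`, `Tr(ρ Õ_l) = 0`) one has
`Σ_N (e^{−Tr ρ}/N!) Tr(ρ^{⊗N} (λ_{∅,N}(Õ₁,…,Õ_m))^* λ_{∅,N}(O₁,…,O_n))
  = δ_{n,m} Σ_{π ∈ S_n} Π_i Tr(ρ Õ_i^* O_{π i})`. -/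
theorem lamEmpty_orthogonality (d n m : ℕ) (hd : 1 ≤ d) (hn : 1 ≤ n) (hm : 1 ≤ m)
    (ρ : Matrix (Fin d) (Fin d) ℂ) (hρ : ρ.PosSemidef)
    (O : Fin n → Matrix (Fin d) (Fin d) ℂ) (Ot : Fin m → Matrix (Fin d) (Fin d) ℂ)
    (hO : ∀ i, (ρ * O i).trace = 0) (hOt : ∀ l, (ρ * Ot l).trace = 0) :
    HasSum
      (fun N : ℕ => (Complex.exp (-ρ.trace) / (N.factorial : ℂ)) *
        (kronPow ρ N * (lamEmpty (N := N) Ot)ᴴ * lamEmpty (N := N) O).trace)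
      (if h : n = m then
        ∑ π : Equiv.Perm (Fin n), ∏ i : Fin n,
          (ρ * (Ot (Fin.cast h i))ᴴ * O (π i)).trace
       else 0) :=
  lamEmpty_orthogonality_general d n m ρ hρ O Ot hO hOt

end
end Stmt4
end

section
/- Let A be an associative unital ℂ-algebra, let d, e ≥ 1, and let a, b : Fin d × Fin e → A satisfy the canonical commutation relations: a(i,k)·b(j,l) − b(j,l)·a(i,k) = δ_{ij}δ_{kl}·1, a(i,k)·a(j,l) = a(j,l)·a(i,k), and b(i,k)·b(j,l) = b(j,l)·b(i,k) for all i,j ∈ Fin d and k,l ∈ Fin e. For a d×d complex matrix O define λ(O) := Σ_{i,j∈Fin d} Σ_{k∈Fin e} O_{ij} · b(i,k) · a(j,k), and for an e×e complex matrix Õ define λ'(Õ) := Σ_{i∈Fin d} Σ_{k,l∈Fin e} Õ_{kl} · b(i,k) · a(i,l). Then λ(O)·λ'(Õ) = λ'(Õ)·λ(O) for all such O and Õ, i.e., the left and right Poisson quantized operators mutually commute. -/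
open scoped BigOperators

namespace Stmt6

/-- The left Poisson quantization `λ(O) = Σ_{i,j,k} O_{ij} · b(i,k) · a(j,k)`. -/
def lam {A : Type*} [Ring A] [Algebra ℂ A] {d e : ℕ}
    (a b : Fin d × Fin e → A) (O : Matrix (Fin d) (Fin d) ℂ) : A :=
  ∑ i : Fin d, ∑ j : Fin d, ∑ k : Fin e, O i j • (b (i, k) * a (j, k))

/-- The right Poisson quantization `λ'(Õ) = Σ_{i,k,l} Õ_{kl} · b(i,k) · a(i,l)`. -/
def lam' {A : Type*} [Ring A] [Algebra ℂ A] {d e : ℕ}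
    (a b : Fin d × Fin e → A) (Ot : Matrix (Fin e) (Fin e) ℂ) : A :=
  ∑ i : Fin d, ∑ k : Fin e, ∑ l : Fin e, Ot k l • (b (i, k) * a (i, l))

/-- If `a`, `b` satisfy the canonical commutation relations
`[a_{ik}, b_{jl}] = δ_{ij}δ_{kl}·1`, `[a_{ik}, a_{jl}] = 0`, `[b_{ik}, b_{jl}] = 0`,
then the left and right Poisson quantized operators mutually commute:
`λ(O)·λ'(Õ) = λ'(Õ)·λ(O)`. -/
theorem lam_commutes_with_lam' {A : Type*} [Ring A] [Algebra ℂ A] (d e : ℕ)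
    (hd : 1 ≤ d) (he : 1 ≤ e) (a b : Fin d × Fin e → A)
    (hab : ∀ (i j : Fin d) (k l : Fin e),
      a (i, k) * b (j, l) - b (j, l) * a (i, k) = if i = j ∧ k = l then (1 : A) else 0)
    (haa : ∀ (i j : Fin d) (k l : Fin e), a (i, k) * a (j, l) = a (j, l) * a (i, k))
    (hbb : ∀ (i j : Fin d) (k l : Fin e), b (i, k) * b (j, l) = b (j, l) * b (i, k))
    (O : Matrix (Fin d) (Fin d) ℂ) (Ot : Matrix (Fin e) (Fin e) ℂ) :
    lam a b O * lam' a b Ot = lam' a b Ot * lam a b O := by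
  have key : ∀ (i j i' : Fin d) (k k' l' : Fin e),
      (b (i,k) * a (j,k)) * (b (i',k') * a (i',l')) =
      (b (i',k') * a (i',l')) * (b (i,k) * a (j,k))
        + (if j = i' ∧ k = k' then b (i,k) * a (i',l') else 0)
        - (if i' = i ∧ l' = k then b (i',k') * a (j,k) else 0) := by
    intro i j i' k k' l'
    have e1 : a (j,k) * b (i',k') = b (i',k') * a (j,k) + (if j = i' ∧ k = k' then (1:A) else 0) :=
      sub_eq_iff_eq_add'.mp (hab j i' k k')
    have e2 : a (i',l') * b (i,k) = b (i,k) * a (i',l') + (if i' = i ∧ l' = k then (1:A) else 0) :=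
      sub_eq_iff_eq_add'.mp (hab i' i l' k)
    have L : (b (i,k) * a (j,k)) * (b (i',k') * a (i',l'))
        = b (i',k') * b (i,k) * (a (i',l') * a (j,k))
          + (if j = i' ∧ k = k' then b (i,k) * a (i',l') else 0) := by
      calc (b (i,k) * a (j,k)) * (b (i',k') * a (i',l'))
          = b (i,k) * (a (j,k) * b (i',k')) * a (i',l') := by noncomm_ring
        _ = b (i,k) * (b (i',k') * a (j,k) + (if j = i' ∧ k = k' then (1:A) else 0)) * a (i',l') := by
            rw [e1]
        _ = b (i,k) * b (i',k') * (a (j,k) * a (i',l'))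
              + (if j = i' ∧ k = k' then b (i,k) * a (i',l') else 0) := by
            by_cases h : j = i' ∧ k = k' <;> simp [h] <;> noncomm_ring
        _ = _ := by rw [hbb i i' k k', haa j i' k l']
    have R : (b (i',k') * a (i',l')) * (b (i,k) * a (j,k))
        = b (i',k') * b (i,k) * (a (i',l') * a (j,k))
          + (if i' = i ∧ l' = k then b (i',k') * a (j,k) else 0) := by
      calc (b (i',k') * a (i',l')) * (b (i,k) * a (j,k))
          = b (i',k') * (a (i',l') * b (i,k)) * a (j,k) := by noncomm_ring
        _ = b (i',k') * (b (i,k) * a (i',l') + (if i' = i ∧ l' = k then (1:A) else 0)) * a (j,k) := by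
            rw [e2]
        _ = b (i',k') * b (i,k) * (a (i',l') * a (j,k))
              + (if i' = i ∧ l' = k then b (i',k') * a (j,k) else 0) := by
            by_cases h : i' = i ∧ l' = k <;> simp [h] <;> noncomm_ring
    rw [L, R]; abel
  rw [← sub_eq_zero]
  have h1 : lam a b O = ∑ p : Fin d × Fin d × Fin e, O p.1 p.2.1 • (b (p.1, p.2.2) * a (p.2.1, p.2.2)) := by
    simp [lam, Fintype.sum_prod_type]
  have h2 : lam' a b Ot = ∑ q : Fin d × Fin e × Fin e, Ot q.2.1 q.2.2 • (b (q.1, q.2.1) * a (q.1, q.2.2)) := by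
    simp [lam', Fintype.sum_prod_type]
  rw [h1, h2, Finset.sum_mul_sum, Finset.sum_mul_sum]
  rw [Finset.sum_comm (s := Finset.univ) (t := Finset.univ)
    (f := fun (q : Fin d × Fin e × Fin e) (p : Fin d × Fin d × Fin e) =>
      (Ot q.2.1 q.2.2 • (b (q.1, q.2.1) * a (q.1, q.2.2))) * (O p.1 p.2.1 • (b (p.1, p.2.2) * a (p.2.1, p.2.2))))]
  rw [← Finset.sum_sub_distrib]
  simp only [← Finset.sum_sub_distrib]
  have step : ∀ (p : Fin d × Fin d × Fin e) (q : Fin d × Fin e × Fin e),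
      (O p.1 p.2.1 • (b (p.1, p.2.2) * a (p.2.1, p.2.2))) * (Ot q.2.1 q.2.2 • (b (q.1, q.2.1) * a (q.1, q.2.2)))
      - (Ot q.2.1 q.2.2 • (b (q.1, q.2.1) * a (q.1, q.2.2))) * (O p.1 p.2.1 • (b (p.1, p.2.2) * a (p.2.1, p.2.2)))
      = (O p.1 p.2.1 * Ot q.2.1 q.2.2) •
        ((if p.2.1 = q.1 ∧ p.2.2 = q.2.1 then b (p.1, p.2.2) * a (q.1, q.2.2) else 0)
          - (if q.1 = p.1 ∧ q.2.2 = p.2.2 then b (q.1, q.2.1) * a (p.2.1, p.2.2) else 0)) := by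
    intro p q
    have hk := key p.1 p.2.1 q.1 p.2.2 q.2.1 q.2.2
    rw [smul_mul_assoc, smul_mul_assoc, mul_smul_comm, mul_smul_comm, smul_smul, smul_smul,
      mul_comm (Ot q.2.1 q.2.2), ← smul_sub, hk]
    congr 1
    abel
  rw [Finset.sum_congr rfl (fun p _ => Finset.sum_congr rfl (fun q _ => step p q))]
  simp only [smul_sub, Finset.sum_sub_distrib]
  rw [sub_eq_zero]
  simp only [smul_ite, smul_zero, Fintype.sum_prod_type]
  simp only [ite_and, Finset.sum_ite_irrel, Finset.sum_const_zero, Finset.sum_ite_eq,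
    Finset.sum_ite_eq', Finset.mem_univ, if_true]
  exact Finset.sum_congr rfl fun i _ => Finset.sum_congr rfl fun j _ => Finset.sum_comm
end Stmt6
end

section
/- For every n ≥ 1 and every μ ∈ ℂ: Σ_σ μ^{|σ|} · ∏_{A∈σ} |A|! = Σ_{π∈S_n} T_{c(π)}(μ), where the left sum runs over all set partitions σ of {1,…,n} (|A| denoting the size of the block A), the right sum runs over all permutations π of {1,…,n}, c(π) is the number of orbits of π (fixed points counted as orbits), and T_m is the Touchard polynomial. Equivalently: Σ_{σ} ∏_{A∈σ} (Σ_{π_A ∈ Sym(A)} μ) = Σ_{π∈S_n} B_{|π|}(μ), counting one copy of μ for each choice of a permutation on each block. -/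
open scoped BigOperators

namespace Stmt7
noncomputable section

/-- A set partition of `Fin n`: a finset of pairwise disjoint nonempty blocks whose union is
everything. -/
def IsSetPartition {n : ℕ} (σ : Finset (Finset (Fin n))) : Prop :=
  ∅ ∉ σ ∧ (∀ A ∈ σ, ∀ B ∈ σ, A ≠ B → Disjoint A B) ∧ σ.sup id = Finset.univ

instance {n : ℕ} (σ : Finset (Finset (Fin n))) : Decidable (IsSetPartition σ) :=
  inferInstanceAs (Decidable (∅ ∉ σ ∧ (∀ A ∈ σ, ∀ B ∈ σ, A ≠ B → Disjoint A B) ∧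
    σ.sup id = Finset.univ))

/-- Touchard (Bell) polynomial `T_m(x) = Σ_η x^{|η|}`, the sum over all set partitions of an
`m`-element set (`T_0 = 1`). -/
def touchard (m : ℕ) (x : ℂ) : ℂ :=
  ∑ η ∈ Finset.univ.filter (IsSetPartition (n := m)), x ^ η.card

/-- The orbit of `m` under the permutation `π`. -/
def permOrbit {p : ℕ} (π : Equiv.Perm (Fin p)) (m : Fin p) : Finset (Fin p) :=
  Finset.univ.filter (fun y => ∃ t ∈ Finset.range p, (π ^ t) m = y)

/-- Number of orbits of a permutation (fixed points counted as orbits). -/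
def numOrbits {p : ℕ} (π : Equiv.Perm (Fin p)) : ℕ :=
  (Finset.univ.image (permOrbit π)).card

section
variable {α : Type*} [Fintype α] [DecidableEq α]

def IsPart (σ : Finset (Finset α)) : Prop :=
  ∅ ∉ σ ∧ (∀ A ∈ σ, ∀ B ∈ σ, A ≠ B → Disjoint A B) ∧ σ.sup id = Finset.univ

instance (σ : Finset (Finset α)) : Decidable (IsPart σ) :=
  inferInstanceAs (Decidable (∅ ∉ σ ∧ (∀ A ∈ σ, ∀ B ∈ σ, A ≠ B → Disjoint A B) ∧
    σ.sup id = Finset.univ))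

lemma IsPart.cover {σ : Finset (Finset α)} (h : IsPart σ) (x : α) : ∃ A ∈ σ, x ∈ A := by
  have := h.2.2
  have hx : x ∈ σ.sup id := this ▸ Finset.mem_univ x
  simpa [Finset.mem_sup] using hx

lemma IsPart.eq_of_mem {σ : Finset (Finset α)} (h : IsPart σ) {A B : Finset α}
    (hA : A ∈ σ) (hB : B ∈ σ) {x : α} (hxA : x ∈ A) (hxB : x ∈ B) : A = B := by
  by_contra hne
  exact (Finset.disjoint_left.1 (h.2.1 A hA B hB hne)) hxA hxB

lemma IsPart.nonempty {σ : Finset (Finset α)} (h : IsPart σ) {A : Finset α} (hA : A ∈ σ) :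
    A.Nonempty := by
  rcases Finset.eq_empty_or_nonempty A with rfl | hne
  · exact absurd hA h.1
  · exact hne
end
section
variable {α : Type*} [Fintype α] [DecidableEq α] {β : Type*} [Fintype β] [DecidableEq β]

lemma isPart_image (e : α ≃ β) {σ : Finset (Finset α)} (h : IsPart σ) :
    IsPart (σ.image (fun A => A.image e)) := by
  refine ⟨?_, ?_, ?_⟩
  · intro hmem
    rcases Finset.mem_image.1 hmem with ⟨A, hA, hAe⟩
    rw [Finset.image_eq_empty] at hAe
    exact h.1 (hAe ▸ hA)
  · rintro _ hA' _ hB' hne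
    rcases Finset.mem_image.1 hA' with ⟨A, hA, rfl⟩
    rcases Finset.mem_image.1 hB' with ⟨B, hB, rfl⟩
    have hAB : A ≠ B := fun hh => hne (by rw [hh])
    rw [Finset.disjoint_image e.injective]
    exact h.2.1 A hA B hB hAB
  · apply Finset.eq_univ_iff_forall.2
    intro y
    rcases h.cover (e.symm y) with ⟨A, hA, hxA⟩
    rw [Finset.mem_sup]
    exact ⟨A.image e, Finset.mem_image_of_mem _ hA,
      by simpa using Finset.mem_image_of_mem e hxA⟩

lemma sum_isPart_equiv (e : α ≃ β) (μ : ℂ) :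
    ∑ σ ∈ Finset.univ.filter (IsPart (α := α)), μ ^ σ.card
      = ∑ σ ∈ Finset.univ.filter (IsPart (α := β)), μ ^ σ.card := by
  refine Finset.sum_nbij' (fun σ => σ.image (fun A => A.image e))
    (fun σ => σ.image (fun A => A.image e.symm)) ?_ ?_ ?_ ?_ ?_
  · intro σ hσ
    simp only [Finset.mem_filter, Finset.mem_univ, true_and] at hσ ⊢
    exact isPart_image e hσ
  · intro σ hσ
    simp only [Finset.mem_filter, Finset.mem_univ, true_and] at hσ ⊢
    exact isPart_image e.symm hσ
  · intro σ _
    simp only [Finset.image_image]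
    have : ((fun A => Finset.image (⇑e.symm) A) ∘ fun A => Finset.image (⇑e) A) = id := by
      funext A; simp [Finset.image_image]
    rw [this, Finset.image_id]
  · intro σ _
    simp only [Finset.image_image]
    have : ((fun A => Finset.image (⇑e) A) ∘ fun A => Finset.image (⇑e.symm) A) = id := by
      funext A; simp [Finset.image_image]
    rw [this, Finset.image_id]
  · intro σ _
    congr 1
    rw [Finset.card_image_of_injective _ (Finset.image_injective e.injective)]
end

lemma isSetPartition_iff_isPart {m : ℕ} (σ : Finset (Finset (Fin m))) :
    IsSetPartition σ ↔ IsPart σ := Iff.rfl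

lemma sum_isPart_eq_touchard {α : Type*} [Fintype α] [DecidableEq α] (μ : ℂ) :
    ∑ σ ∈ Finset.univ.filter (IsPart (α := α)), μ ^ σ.card = touchard (Fintype.card α) μ := by
  rw [touchard, sum_isPart_equiv (Fintype.equivFin α) μ]
  apply Finset.sum_congr _ (fun _ _ => rfl)
  apply Finset.filter_congr
  intro σ _
  exact (isSetPartition_iff_isPart σ).symm
section Coarsen
variable {α : Type*} [Fintype α] [DecidableEq α] {P : Finset (Finset α)}

lemma block_eq_sup (hP : IsPart P) {σ : Finset (Finset α)} (hσ : IsPart σ)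
    (hco : ∀ B ∈ P, ∃ A ∈ σ, B ⊆ A) {A : Finset α} (hA : A ∈ σ) :
    A = (Finset.univ.filter (fun b : {B // B ∈ P} => (b : Finset α) ⊆ A)).sup
      (fun b => (b : Finset α)) := by
  ext x
  rw [Finset.mem_sup]
  constructor
  · intro hx
    rcases hP.cover x with ⟨B, hB, hxB⟩
    rcases hco B hB with ⟨A', hA', hBA'⟩
    have : A = A' := hσ.eq_of_mem hA hA' hx (hBA' hxB)
    exact ⟨⟨B, hB⟩, Finset.mem_filter.2 ⟨Finset.mem_univ _, this ▸ hBA'⟩, hxB⟩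
  · rintro ⟨b, hb, hxb⟩
    exact (Finset.mem_filter.1 hb).2 hxb

lemma sum_coarsenings (hP : IsPart P) (μ : ℂ)
    {p : Finset (Finset α) → Prop} [DecidablePred p]
    (hp : ∀ σ, p σ ↔ (IsPart σ ∧ ∀ B ∈ P, ∃ A ∈ σ, B ⊆ A)) :
    ∑ σ ∈ Finset.univ.filter p, μ ^ σ.card = touchard P.card μ := by
  rw [Finset.filter_congr (fun σ _ => hp σ)]
  rw [← Fintype.card_coe P, ← sum_isPart_eq_touchard]
  refine Finset.sum_nbij'
    (fun σ => σ.image (fun A => Finset.univ.filter (fun b : {B // B ∈ P} => (b : Finset α) ⊆ A)))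
    (fun η => η.image (fun p => p.sup (fun b => (b : Finset α)))) ?_ ?_ ?_ ?_ ?_
  · -- forward map lands in partitions of ↥P
    intro σ hσ'
    rw [Finset.mem_filter] at hσ'
    obtain ⟨-, hσ, hco⟩ := hσ'
    rw [Finset.mem_filter]
    refine ⟨Finset.mem_univ _, ?_, ?_, ?_⟩
    · intro hmem
      rcases Finset.mem_image.1 hmem with ⟨A, hA, hAe⟩
      have := block_eq_sup hP hσ hco hA
      rw [hAe] at this
      simp only [Finset.sup_empty, Finset.bot_eq_empty] at this
      exact hσ.1 (this ▸ hA)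
    · rintro _ hp _ hq hne
      rcases Finset.mem_image.1 hp with ⟨A, hA, rfl⟩
      rcases Finset.mem_image.1 hq with ⟨A', hA', rfl⟩
      rw [Finset.disjoint_left]
      intro b hbA hbA'
      have h1 : (b : Finset α) ⊆ A := (Finset.mem_filter.1 hbA).2
      have h2 : (b : Finset α) ⊆ A' := (Finset.mem_filter.1 hbA').2
      rcases hP.nonempty b.2 with ⟨x, hx⟩
      have : A = A' := hσ.eq_of_mem hA hA' (h1 hx) (h2 hx)
      exact hne (by rw [this])
    · apply Finset.eq_univ_iff_forall.2
      intro b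
      rcases hco b.1 b.2 with ⟨A, hA, hbA⟩
      rw [Finset.mem_sup]
      exact ⟨_, Finset.mem_image_of_mem _ hA,
        Finset.mem_filter.2 ⟨Finset.mem_univ _, hbA⟩⟩
  · -- backward map lands in coarsenings
    intro η hη'
    rw [Finset.mem_filter] at hη'
    obtain ⟨-, hη⟩ := hη'
    rw [Finset.mem_filter]
    refine ⟨Finset.mem_univ _, ⟨?_, ?_, ?_⟩, ?_⟩
    · intro hmem
      rcases Finset.mem_image.1 hmem with ⟨p, hp, hpe⟩
      rcases hη.nonempty hp with ⟨b, hb⟩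
      rcases hP.nonempty b.2 with ⟨x, hx⟩
      have : x ∈ p.sup (fun b => (b : Finset α)) := Finset.mem_sup.2 ⟨b, hb, hx⟩
      rw [hpe] at this
      exact absurd this (Finset.notMem_empty x)
    · rintro _ hp' _ hq' hne
      rcases Finset.mem_image.1 hp' with ⟨p, hp, rfl⟩
      rcases Finset.mem_image.1 hq' with ⟨q, hq, rfl⟩
      rw [Finset.disjoint_left]
      intro x hxp hxq
      rcases Finset.mem_sup.1 hxp with ⟨b, hb, hxb⟩
      rcases Finset.mem_sup.1 hxq with ⟨c, hc, hxc⟩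
      have hbc : b = c := Subtype.ext (hP.eq_of_mem b.2 c.2 hxb hxc)
      have hpq : p ≠ q := fun hh => hne (by rw [hh])
      exact Finset.disjoint_left.1 (hη.2.1 p hp q hq hpq) hb (hbc ▸ hc)
    · apply Finset.eq_univ_iff_forall.2
      intro x
      rcases hP.cover x with ⟨B, hB, hxB⟩
      rcases hη.cover ⟨B, hB⟩ with ⟨p, hp, hbp⟩
      rw [Finset.mem_sup]
      exact ⟨_, Finset.mem_image_of_mem _ hp, Finset.mem_sup.2 ⟨⟨B, hB⟩, hbp, hxB⟩⟩
    · intro B hB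
      rcases hη.cover ⟨B, hB⟩ with ⟨p, hp, hbp⟩
      exact ⟨_, Finset.mem_image_of_mem _ hp, (fun x hx => Finset.mem_sup.2 ⟨⟨B, hB⟩, hbp, hx⟩)⟩
  · -- left inverse
    intro σ hσ'
    rw [Finset.mem_filter] at hσ'
    obtain ⟨-, hσ, hco⟩ := hσ'
    simp only [Finset.image_image]
    have : ∀ A ∈ σ, ((fun p => p.sup (fun b : {B // B ∈ P} => (b : Finset α))) ∘
        (fun A => Finset.univ.filter (fun b : {B // B ∈ P} => (b : Finset α) ⊆ A))) A = id A :=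
      fun A hA => (block_eq_sup hP hσ hco hA).symm
    rw [Finset.image_congr this, Finset.image_id]
  · -- right inverse
    intro η hη'
    rw [Finset.mem_filter] at hη'
    obtain ⟨-, hη⟩ := hη'
    simp only [Finset.image_image]
    have : ∀ p ∈ η, ((fun A => Finset.univ.filter (fun b : {B // B ∈ P} => (b : Finset α) ⊆ A)) ∘
        (fun p => p.sup (fun b : {B // B ∈ P} => (b : Finset α)))) p = id p := by
      intro p hp
      ext b
      simp only [Function.comp_apply, Finset.mem_filter, Finset.mem_univ, true_and, id]
      constructor
      · intro hsub
        rcases hP.nonempty b.2 with ⟨x, hx⟩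
        rcases Finset.mem_sup.1 (hsub hx) with ⟨c, hc, hxc⟩
        have : b = c := Subtype.ext (hP.eq_of_mem b.2 c.2 hx hxc)
        exact this ▸ hc
      · intro hb
        exact Finset.le_sup (f := fun b : {B // B ∈ P} => (b : Finset α)) hb
    rw [Finset.image_congr this, Finset.image_id]
  · -- cardinality preserved
    intro σ hσ'
    rw [Finset.mem_filter] at hσ'
    obtain ⟨-, hσ, hco⟩ := hσ'
    congr 1
    rw [Finset.card_image_of_injOn]
    intro A hA A' hA' heq
    simp only at heq
    simp only [Finset.mem_coe] at hA hA'
    rw [block_eq_sup hP hσ hco hA, block_eq_sup hP hσ hco hA', heq]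
end Coarsen

section Orbits
variable {n : ℕ} (π : Equiv.Perm (Fin n))

lemma mem_permOrbit {m y : Fin n} : y ∈ permOrbit π m ↔ ∃ t < n, (π ^ t) m = y := by
  simp [permOrbit, Finset.mem_range]

lemma exists_period (m : Fin n) : ∃ d, 0 < d ∧ d ≤ n ∧ (π ^ d) m = m := by
  have hmaps : ∀ t ∈ Finset.range (n + 1), (π ^ t) m ∈ (Finset.univ : Finset (Fin n)) :=
    fun t _ => Finset.mem_univ _
  have hcard : (Finset.univ : Finset (Fin n)).card < (Finset.range (n + 1)).card := by
    simp [Finset.card_range]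
  obtain ⟨i, hi, j, hj, hne, heq⟩ :=
    Finset.exists_ne_map_eq_of_card_lt_of_maps_to hcard hmaps
  rw [Finset.mem_range] at hi hj
  rcases hne.lt_or_gt with h | h
  · refine ⟨j - i, by omega, by omega, ?_⟩
    have : (π ^ i) ((π ^ (j - i)) m) = (π ^ i) m := by
      rw [← Equiv.Perm.mul_apply, ← pow_add]
      rw [show i + (j - i) = j by omega, heq]
    exact (π ^ i).injective this
  · refine ⟨i - j, by omega, by omega, ?_⟩
    have : (π ^ j) ((π ^ (i - j)) m) = (π ^ j) m := by
      rw [← Equiv.Perm.mul_apply, ← pow_add]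
      rw [show j + (i - j) = i by omega, heq.symm]
    exact (π ^ j).injective this

lemma pow_mul_period {m : Fin n} {d : ℕ} (hdm : (π ^ d) m = m) (k : ℕ) :
    (π ^ (d * k)) m = m := by
  induction k with
  | zero => simp
  | succ k ih => rw [Nat.mul_succ, pow_add, Equiv.Perm.mul_apply, hdm, ih]

lemma pow_mem_permOrbit (m : Fin n) (e : ℕ) : (π ^ e) m ∈ permOrbit π m := by
  obtain ⟨d, hd0, hdn, hdm⟩ := exists_period π m
  rw [mem_permOrbit]
  refine ⟨e % d, lt_of_lt_of_le (Nat.mod_lt _ hd0) hdn, ?_⟩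
  conv_rhs => rw [show e = d * (e / d) + e % d from (Nat.div_add_mod e d).symm]
  rw [add_comm, pow_add, Equiv.Perm.mul_apply]
  congr 1
  exact (pow_mul_period π hdm (e / d)).symm

lemma self_mem_permOrbit (m : Fin n) : m ∈ permOrbit π m := by
  simpa using pow_mem_permOrbit π m 0

lemma permOrbit_eq_of_mem {m x : Fin n} (h : x ∈ permOrbit π m) :
    permOrbit π x = permOrbit π m := by
  rcases (mem_permOrbit π).1 h with ⟨s, -, rfl⟩
  have hmem : ∀ a b : Fin n, ∀ e : ℕ, a = (π ^ e) b → permOrbit π a ⊆ permOrbit π b := by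
    rintro a b e rfl y hy
    rcases (mem_permOrbit π).1 hy with ⟨t, -, rfl⟩
    rw [← Equiv.Perm.mul_apply, ← pow_add]
    exact pow_mem_permOrbit π b _
  apply subset_antisymm (hmem _ _ s rfl)
  obtain ⟨d, hd0, hdn, hdm⟩ := exists_period π m
  apply hmem m ((π ^ s) m) (s * d - s)
  rw [← Equiv.Perm.mul_apply, ← pow_add, show s * d - s + s = s * d by
    have : s ≤ s * d := Nat.le_mul_of_pos_right s hd0
    omega, show s * d = d * s from Nat.mul_comm s d]
  exact (pow_mul_period π hdm s).symm

lemma isPart_orbits : IsPart (Finset.univ.image (permOrbit π)) := by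
  refine ⟨?_, ?_, ?_⟩
  · intro hmem
    rcases Finset.mem_image.1 hmem with ⟨m, -, hm⟩
    exact absurd (hm ▸ self_mem_permOrbit π m) (Finset.notMem_empty m)
  · rintro _ hA _ hB hne
    rcases Finset.mem_image.1 hA with ⟨a, -, rfl⟩
    rcases Finset.mem_image.1 hB with ⟨b, -, rfl⟩
    rw [Finset.disjoint_left]
    intro x hxa hxb
    exact hne ((permOrbit_eq_of_mem π hxa).symm.trans (permOrbit_eq_of_mem π hxb))
  · apply Finset.eq_univ_iff_forall.2
    intro x
    exact Finset.mem_sup.2 ⟨permOrbit π x, Finset.mem_image_of_mem _ (Finset.mem_univ x),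
      self_mem_permOrbit π x⟩

lemma stab_iff_coarsen {σ : Finset (Finset (Fin n))} (hσ : IsPart σ) :
    (∀ A ∈ σ, ∀ x ∈ A, π x ∈ A) ↔
      ∀ B ∈ Finset.univ.image (permOrbit π), ∃ A ∈ σ, B ⊆ A := by
  constructor
  · intro hstab B hB
    rcases Finset.mem_image.1 hB with ⟨m, -, rfl⟩
    rcases hσ.cover m with ⟨A, hA, hmA⟩
    refine ⟨A, hA, ?_⟩
    intro y hy
    rcases (mem_permOrbit π).1 hy with ⟨t, -, rfl⟩
    clear hy
    induction t with
    | zero => simpa using hmA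
    | succ k ih =>
      rw [pow_succ', Equiv.Perm.mul_apply]
      exact hstab A hA _ ih
  · intro hco A hA x hxA
    rcases hco (permOrbit π x) (Finset.mem_image_of_mem _ (Finset.mem_univ x)) with
      ⟨A', hA', hsub⟩
    have hxA' : x ∈ A' := hsub (self_mem_permOrbit π x)
    have : A = A' := hσ.eq_of_mem hA hA' hxA hxA'
    subst this
    exact hsub (by simpa using pow_mem_permOrbit π x 1)
end Orbits
section Count
variable {α : Type*} [Fintype α] [DecidableEq α]

lemma card_stabilizing {σ : Finset (Finset α)} (hσ : IsPart σ)
    {p : Equiv.Perm α → Prop} [DecidablePred p]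
    (hp : ∀ π, p π ↔ ∀ A ∈ σ, ∀ x ∈ A, π x ∈ A) :
    (Finset.univ.filter p).card = ∏ A ∈ σ, A.card.factorial := by
  rw [Finset.filter_congr (fun π _ => hp π)]
  have hexu : ∀ x : α, ∃! A, A ∈ σ ∧ x ∈ A := by
    intro x
    rcases hσ.cover x with ⟨A, hA, hxA⟩
    exact ⟨A, ⟨hA, hxA⟩, fun B hB => hσ.eq_of_mem hB.1 hA hB.2 hxA⟩
  set blk : α → Finset α := fun x => σ.choose (fun A => x ∈ A) (hexu x) with hblk
  have hblk_mem : ∀ x, blk x ∈ σ := fun x => Finset.choose_mem (fun A => x ∈ A) σ (hexu x)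
  have hblk_self : ∀ x, x ∈ blk x := fun x => Finset.choose_property (fun A => x ∈ A) σ (hexu x)
  have hblk_eq : ∀ {x : α} {A : Finset α}, A ∈ σ → x ∈ A → blk x = A :=
    fun {x A} hA hxA => hσ.eq_of_mem (hblk_mem x) hA (hblk_self x) hxA
  have hcond : ∀ π : Equiv.Perm α,
      (∀ A ∈ σ, ∀ x ∈ A, π x ∈ A) ↔ blk ∘ π = blk := by
    intro π
    constructor
    · intro h
      funext x
      have : π x ∈ blk x := h _ (hblk_mem x) x (hblk_self x)
      exact hblk_eq (hblk_mem x) this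
    · intro h A hA x hxA
      have hbx : blk x = A := hblk_eq hA hxA
      have : blk (π x) = blk x := congrFun h x
      rw [hbx] at this
      exact this ▸ hblk_self (π x)
  have h1 : (Finset.univ.filter (fun π : Equiv.Perm α => ∀ A ∈ σ, ∀ x ∈ A, π x ∈ A))
      = (Finset.univ.filter (fun π : Equiv.Perm α => blk ∘ π = blk)) := by
    apply Finset.filter_congr
    intro π _
    exact hcond π
  rw [h1, ← Fintype.card_subtype, DomMulAct.stabilizer_card']
  have himg : Finset.univ.image blk = σ := by
    ext A
    constructor
    · intro hA
      rcases Finset.mem_image.1 hA with ⟨x, -, rfl⟩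
      exact hblk_mem x
    · intro hA
      rcases hσ.nonempty hA with ⟨x, hx⟩
      exact Finset.mem_image.2 ⟨x, Finset.mem_univ x, hblk_eq hA hx⟩
  rw [himg]
  apply Finset.prod_congr rfl
  intro A hA
  congr 1
  rw [Fintype.card_subtype]
  congr 1
  ext x
  simp only [Finset.mem_filter, Finset.mem_univ, true_and]
  constructor
  · intro h; exact h ▸ hblk_self x
  · intro h; exact hblk_eq hA h
end Count
/-- `Σ_σ μ^{|σ|} Π_{A∈σ} |A|! = Σ_{π ∈ S_n} T_{c(π)}(μ)` : summing one copy of `μ` for each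
choice of a permutation on each block of a set partition equals the Touchard-weighted sum
over all permutations. -/
theorem partition_permutation_touchard_identity (n : ℕ) (hn : 1 ≤ n) (μ : ℂ) :
    (∑ σ ∈ Finset.univ.filter (IsSetPartition (n := n)),
        μ ^ σ.card * ∏ A ∈ σ, (A.card.factorial : ℂ))
      = ∑ π : Equiv.Perm (Fin n), touchard (numOrbits π) μ := by
  have hfilter : Finset.univ.filter (IsSetPartition (n := n))
      = Finset.univ.filter (IsPart (α := Fin n)) :=
    Finset.filter_congr (fun σ _ => Iff.rfl)
  rw [hfilter]
  have step1 : ∀ σ ∈ Finset.univ.filter (IsPart (α := Fin n)),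
      μ ^ σ.card * ∏ A ∈ σ, (A.card.factorial : ℂ)
        = ∑ π ∈ Finset.univ.filter (fun π : Equiv.Perm (Fin n) => ∀ A ∈ σ, ∀ x ∈ A, π x ∈ A),
            μ ^ σ.card := by
    intro σ hσ
    rw [Finset.mem_filter] at hσ
    rw [Finset.sum_const, nsmul_eq_mul, mul_comm,
      card_stabilizing hσ.2 (fun _ => Iff.rfl), Nat.cast_prod]
  rw [Finset.sum_congr rfl step1]
  rw [Finset.sum_comm' (t' := (Finset.univ : Finset (Equiv.Perm (Fin n))))
    (s' := fun π => Finset.univ.filter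
      (fun σ : Finset (Finset (Fin n)) => IsPart σ ∧ ∀ A ∈ σ, ∀ x ∈ A, π x ∈ A))
    (fun σ π => by simp only [Finset.mem_filter, Finset.mem_univ, true_and, and_assoc, and_true])]
  apply Finset.sum_congr rfl
  intro π _
  rw [sum_coarsenings (isPart_orbits π) μ
    (fun σ => and_congr_right (fun hσ => stab_iff_coarsen π hσ))]
  rfl

end
end Stmt7
end

section
/- Let n ≥ 1 and let g assign a complex number to every nonempty list of distinct elements of {1,…,n}, invariant under cyclic rotation of the list. For a permutation τ of a nonempty subset A ⊆ {1,…,n}, define F(τ) := ∏_{γ orbit of τ} g(m, τ(m), τ²(m), …, τ^{|γ|−1}(m)) where m is any element of the orbit γ (well-defined by the cyclic invariance of g; fixed points count as orbits of size 1). Then for every μ ∈ ℂ: Σ_{σ} μ^{|σ|} · ∏_{A∈σ} ( Σ_{τ ∈ Sym(A)} F(τ) ) = Σ_{π∈S_n} T_{c(π)}(μ) · F(π), where σ runs over all set partitions of {1,…,n}, Sym(A) is the group of permutations of the block A, S_n is the symmetric group on {1,…,n}, and c(π) is the number of orbits of π. -/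
/-! Multiplicativity of `F` over permutations with disjoint supports turns the product over the
blocks of `σ` of `Σ_{τ ∈ Sym(A)} F(τ)` into the sum of `F(π)` over the permutations `π` mapping
every block of `σ` into itself. Exchanging the two sums, the coefficient of `F(π)` is the sum of
`μ^|σ|` over the partitions whose blocks are unions of orbits of `π`; these are the pullbacks of
the set partitions of the `c(π)` orbits, so the coefficient is `T_{c(π)}(μ)`. -/

open scoped BigOperators

namespace Stmt8
noncomputable section

/-- A set partition of `Fin n`: a finset of pairwise disjoint nonempty blocks whose union is
everything. -/
def IsSetPartition {n : ℕ} (σ : Finset (Finset (Fin n))) : Prop :=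
  ∅ ∉ σ ∧ (∀ A ∈ σ, ∀ B ∈ σ, A ≠ B → Disjoint A B) ∧ σ.sup id = Finset.univ

instance {n : ℕ} (σ : Finset (Finset (Fin n))) : Decidable (IsSetPartition σ) :=
  inferInstanceAs (Decidable (∅ ∉ σ ∧ (∀ A ∈ σ, ∀ B ∈ σ, A ≠ B → Disjoint A B) ∧
    σ.sup id = Finset.univ))

/-- Touchard (Bell) polynomial `T_m(x) = Σ_η x^{|η|}`, the sum over all set partitions of an
`m`-element set (`T_0 = 1`). -/
def touchard (m : ℕ) (x : ℂ) : ℂ :=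
  ∑ η ∈ Finset.univ.filter (IsSetPartition (n := m)), x ^ η.card

/-- The orbit of `m` under the permutation `π`. -/
def permOrbit {p : ℕ} (π : Equiv.Perm (Fin p)) (m : Fin p) : Finset (Fin p) :=
  Finset.univ.filter (fun y => ∃ t ∈ Finset.range p, (π ^ t) m = y)

/-- Number of orbits of a permutation (fixed points counted as orbits). -/
def numOrbits {p : ℕ} (π : Equiv.Perm (Fin p)) : ℕ :=
  (Finset.univ.image (permOrbit π)).card

/-- The list `[m, π m, π² m, …, π^{|orbit|−1} m]` traversing the orbit of `m` under `π`. -/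
def cycleList {n : ℕ} (π : Equiv.Perm (Fin n)) (m : Fin n) : List (Fin n) :=
  (List.range (permOrbit π m).card).map (fun t => (π ^ t) m)

/-- The multiplicative function `F(τ) = Π_{γ orbit of τ, γ ⊆ A} g(m, τ m, τ² m, …)`
associated to `g`, over the ground set `A`: the product over the orbits of `τ` lying in `A`
of `g` evaluated on the cycle list starting at the minimal element of the orbit
(by cyclic invariance of `g` the choice of starting point is immaterial). -/
def cycleFun {n : ℕ} (g : List (Fin n) → ℂ) (A : Finset (Fin n))
    (τ : Equiv.Perm (Fin n)) : ℂ :=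
  ∏ m ∈ A.filter (fun m => ∀ y ∈ permOrbit τ m, m ≤ y), g (cycleList τ m)


open Finset

section Orbits

variable {α : Type*}

theorem exists_lt_card_pow_apply_eq [Fintype α] {π : Equiv.Perm α} {x y : α}
    (h : π.SameCycle x y) : ∃ k < Fintype.card α, (π ^ k) x = y := by
  obtain ⟨k, rfl⟩ := h.exists_nat_pow_eq
  have hpos := Function.minimalPeriod_pos_of_mem_periodicPts (π.injective.mem_periodicPts x)
  refine ⟨k % Function.minimalPeriod π x,
    (Nat.mod_lt _ hpos).trans_le Function.minimalPeriod_le_card, ?_⟩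
  simp only [Equiv.Perm.coe_pow, Function.iterate_mod_minimalPeriod_eq]

theorem mem_of_sameCycle [Finite α] {π : Equiv.Perm α} {s : Set α} (hs : Set.MapsTo π s s)
    {x y : α} (h : π.SameCycle x y) (hx : x ∈ s) : y ∈ s := by
  obtain ⟨k, rfl⟩ := h.exists_nat_pow_eq
  rw [Equiv.Perm.coe_pow]
  exact hs.iterate k hx

theorem mapsTo_iff_forall_sameCycle [Finite α] {π : Equiv.Perm α} {s : Set α} :
    Set.MapsTo π s s ↔ ∀ x y, π.SameCycle x y → x ∈ s → y ∈ s :=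
  ⟨fun hs _ _ => mem_of_sameCycle hs,
    fun h x => h x (π x) (Equiv.Perm.sameCycle_apply_right.mpr (.refl π x))⟩

end Orbits

variable {n : ℕ}

theorem mem_permOrbit_iff {π : Equiv.Perm (Fin n)} {x y : Fin n} :
    y ∈ permOrbit π x ↔ π.SameCycle x y := by
  simp only [permOrbit, mem_filter, mem_univ, true_and, mem_range]
  constructor
  · rintro ⟨k, -, rfl⟩
    exact Equiv.Perm.sameCycle_pow_right.mpr (Equiv.Perm.SameCycle.refl π x)
  · intro h
    simpa using exists_lt_card_pow_apply_eq h

theorem permOrbit_eq_iff {π : Equiv.Perm (Fin n)} {x y : Fin n} :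
    permOrbit π x = permOrbit π y ↔ π.SameCycle x y := by
  refine ⟨fun h => mem_permOrbit_iff.mp (h ▸ mem_permOrbit_iff.mpr (.refl π y)), fun h => ?_⟩
  ext z
  simp only [mem_permOrbit_iff]
  exact ⟨h.symm.trans, h.trans⟩

def orbitEquivFin (π : Equiv.Perm (Fin n)) : univ.image (permOrbit π) ≃ Fin (numOrbits π) :=
  equivFin _

def orbitIndex (π : Equiv.Perm (Fin n)) (x : Fin n) : Fin (numOrbits π) :=
  orbitEquivFin π ⟨permOrbit π x, mem_image_of_mem _ (mem_univ x)⟩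

theorem orbitIndex_surjective (π : Equiv.Perm (Fin n)) : Function.Surjective (orbitIndex π) := by
  intro i
  obtain ⟨x, -, hx⟩ := mem_image.mp ((orbitEquivFin π).symm i).2
  exact ⟨x, (Equiv.eq_symm_apply _).mp (Subtype.ext hx)⟩

theorem orbitIndex_eq_iff {π : Equiv.Perm (Fin n)} {x y : Fin n} :
    orbitIndex π x = orbitIndex π y ↔ π.SameCycle x y := by
  refine ⟨fun h => permOrbit_eq_iff.mp (congrArg Subtype.val ((orbitEquivFin π).injective h)),
    fun h => ?_⟩
  unfold orbitIndex
  congr 2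
  exact permOrbit_eq_iff.mpr h

section DisjointSupports

variable {α : Type*} {A B : Finset α} {τ π ρ : Equiv.Perm α} {x : α}

theorem apply_mem_of_forall_notMem (hτ : ∀ x ∉ A, τ x = x) (hx : x ∈ A) : τ x ∈ A := by
  by_contra h
  rw [τ.injective (hτ _ h)] at h
  exact h hx

theorem pow_apply_eq_pow_apply (hmaps : ∀ x ∈ A, τ x ∈ A) (heq : ∀ x ∈ A, τ x = π x)
    (t : ℕ) : ∀ x ∈ A, (τ ^ t) x = (π ^ t) x := by
  induction t with
  | zero => simp
  | succ t ih =>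
    intro x hx
    rw [pow_succ, pow_succ, Equiv.Perm.mul_apply, Equiv.Perm.mul_apply, heq x hx,
      ih _ (heq x hx ▸ hmaps x hx)]

theorem mul_apply_of_mem_left (hd : Disjoint A B) (hπ : ∀ x ∉ B, π x = x) (hx : x ∈ A) :
    (τ * π) x = τ x := by
  rw [Equiv.Perm.mul_apply, hπ x (disjoint_left.mp hd hx)]

theorem mul_apply_of_mem_right (hd : Disjoint A B) (hτ : ∀ x ∉ A, τ x = x)
    (hπ : ∀ x ∉ B, π x = x) (hx : x ∈ B) : (τ * π) x = π x := by
  rw [Equiv.Perm.mul_apply, hτ _ (disjoint_right.mp hd (apply_mem_of_forall_notMem hπ hx))]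

variable [DecidableEq α]

/-- `π` on `A` and the identity elsewhere; the identity altogether if `π` does not map `A` into
itself. -/
def restrictPerm (π : Equiv.Perm α) (A : Finset α) : Equiv.Perm α :=
  if h : ∀ x ∈ A, π x ∈ A then Equiv.Perm.ofSubtype (π.subtypePermOfFintype h) else 1

theorem restrictPerm_apply_of_mem (h : ∀ x ∈ A, π x ∈ A) (hx : x ∈ A) :
    restrictPerm π A x = π x := by
  rw [restrictPerm, dif_pos h, Equiv.Perm.ofSubtype_apply_of_mem _ hx]
  rfl

theorem restrictPerm_apply_of_notMem (hx : x ∉ A) : restrictPerm π A x = x := by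
  unfold restrictPerm
  split
  · exact Equiv.Perm.ofSubtype_apply_of_not_mem _ hx
  · rfl

theorem restrictPerm_eq (hτ : ∀ x ∉ A, τ x = x) (h : ∀ x ∈ A, π x = τ x) :
    restrictPerm π A = τ := by
  have hmaps : ∀ x ∈ A, π x ∈ A := fun x hx => h x hx ▸ apply_mem_of_forall_notMem hτ hx
  ext x
  by_cases hx : x ∈ A
  · rw [restrictPerm_apply_of_mem hmaps hx, h x hx]
  · rw [restrictPerm_apply_of_notMem hx, hτ x hx]

theorem restrictPerm_mul_restrictPerm (hd : Disjoint A B) (hA : ∀ x ∈ A, ρ x ∈ A)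
    (hB : ∀ x ∈ B, ρ x ∈ B) (hfix : ∀ x ∉ A ∪ B, ρ x = x) :
    restrictPerm ρ A * restrictPerm ρ B = ρ := by
  ext x
  by_cases hxA : x ∈ A
  · rw [mul_apply_of_mem_left hd (fun _ => restrictPerm_apply_of_notMem) hxA,
      restrictPerm_apply_of_mem hA hxA]
  by_cases hxB : x ∈ B
  · rw [mul_apply_of_mem_right hd (fun _ => restrictPerm_apply_of_notMem)
      (fun _ => restrictPerm_apply_of_notMem) hxB, restrictPerm_apply_of_mem hB hxB]
  rw [Equiv.Perm.mul_apply, restrictPerm_apply_of_notMem hxB, restrictPerm_apply_of_notMem hxA,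
    hfix x (by simp [hxA, hxB])]

end DisjointSupports

theorem permOrbit_congr {τ π : Equiv.Perm (Fin n)} {m : Fin n}
    (h : ∀ t : ℕ, (τ ^ t) m = (π ^ t) m) : permOrbit τ m = permOrbit π m := by
  simp only [permOrbit, h]

theorem cycleList_congr {τ π : Equiv.Perm (Fin n)} {m : Fin n}
    (h : ∀ t : ℕ, (τ ^ t) m = (π ^ t) m) : cycleList τ m = cycleList π m := by
  simp only [cycleList, permOrbit_congr h, h]

section CycleFun

variable (g : List (Fin n) → ℂ) {A B : Finset (Fin n)} {τ π : Equiv.Perm (Fin n)}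

theorem cycleFun_congr (h : ∀ m ∈ A, ∀ t : ℕ, (τ ^ t) m = (π ^ t) m) :
    cycleFun g A τ = cycleFun g A π := by
  unfold cycleFun
  refine prod_congr (filter_congr fun m hm => ?_) fun m hm => ?_
  · rw [permOrbit_congr (h m hm)]
  · rw [cycleList_congr (h m (mem_filter.mp hm).1)]

theorem cycleFun_union (hd : Disjoint A B) (π : Equiv.Perm (Fin n)) :
    cycleFun g (A ∪ B) π = cycleFun g A π * cycleFun g B π := by
  rw [cycleFun, filter_union, prod_union (disjoint_filter_filter hd)]
  rfl

theorem cycleFun_mul (hd : Disjoint A B) (hτ : ∀ x ∉ A, τ x = x) (hπ : ∀ x ∉ B, π x = x) :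
    cycleFun g (A ∪ B) (τ * π) = cycleFun g A τ * cycleFun g B π := by
  rw [cycleFun_union g hd]
  congr 1 <;> refine (cycleFun_congr g fun m hm t => ?_).symm
  · exact pow_apply_eq_pow_apply (fun _ => apply_mem_of_forall_notMem hτ)
      (fun _ hx => (mul_apply_of_mem_left hd hπ hx).symm) t m hm
  · exact pow_apply_eq_pow_apply (fun _ => apply_mem_of_forall_notMem hπ)
      (fun _ hx => (mul_apply_of_mem_right hd hτ hπ hx).symm) t m hm

end CycleFun

section BlockPerms

variable {α : Type*} [DecidableEq α]

theorem mapsTo_sup {π : Equiv.Perm α} {S : Finset (Finset α)} (h : ∀ A ∈ S, ∀ x ∈ A, π x ∈ A) :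
    ∀ x ∈ S.sup id, π x ∈ S.sup id := by
  intro x hx
  obtain ⟨A, hA, hxA⟩ := mem_sup.mp hx
  exact mem_sup.mpr ⟨A, hA, h A hA x hxA⟩

variable [Fintype α]

def permsSupportedIn (A : Finset α) : Finset (Equiv.Perm α) :=
  univ.filter fun τ => ∀ x, x ∉ A → τ x = x

def blockPerms (S : Finset (Finset α)) : Finset (Equiv.Perm α) :=
  univ.filter fun π => (∀ x ∉ S.sup id, π x = x) ∧ ∀ A ∈ S, ∀ x ∈ A, π x ∈ A

theorem mem_permsSupportedIn {A : Finset α} {τ : Equiv.Perm α} :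
    τ ∈ permsSupportedIn A ↔ ∀ x ∉ A, τ x = x := by
  simp [permsSupportedIn]

theorem mem_blockPerms {S : Finset (Finset α)} {π : Equiv.Perm α} :
    π ∈ blockPerms S ↔ (∀ x ∉ S.sup id, π x = x) ∧ ∀ A ∈ S, ∀ x ∈ A, π x ∈ A := by
  simp [blockPerms]

theorem mem_blockPerms_insert {A : Finset α} {S : Finset (Finset α)} {ρ : Equiv.Perm α} :
    ρ ∈ blockPerms (insert A S) ↔ (∀ x ∉ A ∪ S.sup id, ρ x = x) ∧ (∀ x ∈ A, ρ x ∈ A) ∧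
      ∀ B ∈ S, ∀ x ∈ B, ρ x ∈ B := by
  simp only [mem_blockPerms, sup_insert, forall_mem_insert]
  rfl

theorem blockPerms_empty : blockPerms (∅ : Finset (Finset α)) = {1} := by
  ext π
  simp [blockPerms, Equiv.ext_iff]

theorem mul_mem_blockPerms_insert {A : Finset α} {S : Finset (Finset α)} {τ π : Equiv.Perm α}
    (hd : Disjoint A (S.sup id)) (hτ : τ ∈ permsSupportedIn A) (hπ : π ∈ blockPerms S) :
    τ * π ∈ blockPerms (insert A S) := by
  rw [mem_permsSupportedIn] at hτ
  obtain ⟨hπ, hblocks⟩ := mem_blockPerms.mp hπ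
  refine mem_blockPerms_insert.mpr ⟨fun x hx => ?_, fun x hx => ?_, fun B hB x hx => ?_⟩
  · rw [mem_union, not_or] at hx
    rw [Equiv.Perm.mul_apply, hπ x hx.2, hτ x hx.1]
  · rw [mul_apply_of_mem_left hd hπ hx]
    exact apply_mem_of_forall_notMem hτ hx
  · rw [mul_apply_of_mem_right hd hτ hπ (mem_sup.mpr ⟨B, hB, hx⟩)]
    exact hblocks B hB x hx

theorem restrictPerm_sup_mem_blockPerms {S : Finset (Finset α)} {ρ : Equiv.Perm α}
    (h : ∀ A ∈ S, ∀ x ∈ A, ρ x ∈ A) : restrictPerm ρ (S.sup id) ∈ blockPerms S := by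
  refine mem_blockPerms.mpr ⟨fun _ => restrictPerm_apply_of_notMem, fun B hB x hx => ?_⟩
  rw [restrictPerm_apply_of_mem (mapsTo_sup h) (mem_sup.mpr ⟨B, hB, hx⟩)]
  exact h B hB x hx

end BlockPerms

theorem sum_mul_sum_blockPerms_insert (g : List (Fin n) → ℂ) {A : Finset (Fin n)}
    {S : Finset (Finset (Fin n))} (hd : Disjoint A (S.sup id)) :
    (∑ τ ∈ permsSupportedIn A, cycleFun g A τ) * ∑ π ∈ blockPerms S, cycleFun g (S.sup id) π
      = ∑ ρ ∈ blockPerms (insert A S), cycleFun g (A ∪ S.sup id) ρ := by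
  rw [sum_mul_sum, ← sum_product']
  refine sum_nbij' (fun p => p.1 * p.2) (fun ρ => (restrictPerm ρ A, restrictPerm ρ (S.sup id)))
    (fun p hp => mul_mem_blockPerms_insert hd (mem_product.mp hp).1 (mem_product.mp hp).2)
    (fun ρ hρ => ?_) (fun p hp => ?_) (fun ρ hρ => ?_) (fun p hp => ?_)
  · obtain ⟨-, -, hblocks⟩ := mem_blockPerms_insert.mp hρ
    exact mem_product.mpr ⟨mem_permsSupportedIn.mpr fun _ => restrictPerm_apply_of_notMem,
      restrictPerm_sup_mem_blockPerms hblocks⟩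
  · obtain ⟨hτ, hπ⟩ := mem_product.mp hp
    rw [mem_permsSupportedIn] at hτ
    have hπ := (mem_blockPerms.mp hπ).1
    exact Prod.ext (restrictPerm_eq hτ fun x hx => mul_apply_of_mem_left hd hπ hx)
      (restrictPerm_eq hπ fun x hx => mul_apply_of_mem_right hd hτ hπ hx)
  · obtain ⟨hfix, hA, hblocks⟩ := mem_blockPerms_insert.mp hρ
    exact restrictPerm_mul_restrictPerm hd hA (mapsTo_sup hblocks) hfix
  · obtain ⟨hτ, hπ⟩ := mem_product.mp hp
    exact (cycleFun_mul g hd (mem_permsSupportedIn.mp hτ) (mem_blockPerms.mp hπ).1).symm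

theorem prod_sum_permsSupportedIn (g : List (Fin n) → ℂ) (S : Finset (Finset (Fin n)))
    (hS : ∀ A ∈ S, ∀ B ∈ S, A ≠ B → Disjoint A B) :
    ∏ A ∈ S, ∑ τ ∈ permsSupportedIn A, cycleFun g A τ
      = ∑ π ∈ blockPerms S, cycleFun g (S.sup id) π := by
  induction S using Finset.induction_on with
  | empty => simp [blockPerms_empty, cycleFun]
  | @insert A S hA ih =>
    have hd : Disjoint A (S.sup id) := Finset.disjoint_sup_right.mpr fun B hB =>
      hS A (mem_insert_self A S) B (mem_insert_of_mem hB) (ne_of_mem_of_not_mem hB hA).symm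
    rw [prod_insert hA, ih fun B hB C hC => hS B (mem_insert_of_mem hB) C (mem_insert_of_mem hC),
      sum_mul_sum_blockPerms_insert g hd, sup_insert]
    rfl

theorem prod_sum_permsSupportedIn_of_isSetPartition (g : List (Fin n) → ℂ)
    {σ : Finset (Finset (Fin n))} (hσ : IsSetPartition σ) :
    ∏ A ∈ σ, ∑ τ ∈ permsSupportedIn A, cycleFun g A τ
      = ∑ π ∈ univ.filter (fun π => ∀ A ∈ σ, ∀ x ∈ A, π x ∈ A), cycleFun g univ π := by
  rw [prod_sum_permsSupportedIn g σ hσ.2.1, hσ.2.2]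
  congr 1
  ext π
  simp [mem_blockPerms, hσ.2.2]

section SetPartitions

theorem isSetPartition_iff {σ : Finset (Finset (Fin n))} :
    IsSetPartition σ ↔ ∅ ∉ σ ∧ ∀ x, ∃! A, A ∈ σ ∧ x ∈ A := by
  refine and_congr_right fun _ => ⟨fun ⟨hd, hcover⟩ x => ?_, fun h => ⟨?_, ?_⟩⟩
  · obtain ⟨A, hA, hx⟩ := mem_sup.mp (hcover ▸ mem_univ x : x ∈ σ.sup id)
    exact ⟨A, ⟨hA, hx⟩, fun B ⟨hB, hxB⟩ =>
      by_contra fun hne => disjoint_left.mp (hd B hB A hA hne) hxB hx⟩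
  · intro A hA B hB hne
    exact disjoint_left.mpr fun x hxA hxB => hne ((h x).unique ⟨hA, hxA⟩ ⟨hB, hxB⟩)
  · refine eq_univ_of_forall fun x => ?_
    obtain ⟨A, ⟨hA, hx⟩, -⟩ := h x
    exact mem_sup.mpr ⟨A, hA, hx⟩

variable {m : ℕ} {f : Fin n → Fin m}

theorem image_filter_mem (hf : Function.Surjective f) (B : Finset (Fin m)) :
    (univ.filter (f · ∈ B)).image f = B := by
  ext i
  obtain ⟨x, rfl⟩ := hf i
  simp only [mem_image, mem_filter, mem_univ, true_and]
  exact ⟨fun ⟨y, hy, hyx⟩ => hyx ▸ hy, fun hx => ⟨x, hx, rfl⟩⟩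

theorem filter_mem_image {A : Finset (Fin n)} (hA : ∀ x y, f x = f y → x ∈ A → y ∈ A) :
    univ.filter (f · ∈ A.image f) = A := by
  ext x
  simp only [mem_filter, mem_univ, true_and, mem_image]
  exact ⟨fun ⟨y, hy, hyx⟩ => hA y x hyx hy, fun hx => ⟨x, hx, rfl⟩⟩

theorem isSetPartition_image_filter_mem (hf : Function.Surjective f)
    {η : Finset (Finset (Fin m))} (hη : IsSetPartition η) :
    IsSetPartition (η.image fun B => univ.filter (f · ∈ B)) := by
  obtain ⟨hη₀, hη⟩ := isSetPartition_iff.mp hη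
  refine isSetPartition_iff.mpr ⟨fun h => ?_, fun x => ?_⟩
  · obtain ⟨B, hB, hBe⟩ := mem_image.mp h
    rw [← image_filter_mem hf B, hBe, image_empty] at hB
    exact hη₀ hB
  · obtain ⟨B, ⟨hB, hxB⟩, huniq⟩ := hη (f x)
    refine ⟨_, ⟨mem_image_of_mem _ hB, by simpa using hxB⟩, ?_⟩
    rintro _ ⟨hC', hxC⟩
    obtain ⟨C, hC, rfl⟩ := mem_image.mp hC'
    rw [huniq C ⟨hC, by simpa using hxC⟩]

theorem isSetPartition_image_image (hf : Function.Surjective f)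
    {σ : Finset (Finset (Fin n))} (hσ : IsSetPartition σ)
    (hsat : ∀ A ∈ σ, ∀ x y, f x = f y → x ∈ A → y ∈ A) :
    IsSetPartition (σ.image (Finset.image f)) := by
  obtain ⟨hσ₀, hσ⟩ := isSetPartition_iff.mp hσ
  refine isSetPartition_iff.mpr ⟨fun h => ?_, fun i => ?_⟩
  · obtain ⟨A, hA, hAe⟩ := mem_image.mp h
    exact hσ₀ (image_eq_empty.mp hAe ▸ hA)
  · obtain ⟨x, rfl⟩ := hf i
    obtain ⟨A, ⟨hA, hxA⟩, huniq⟩ := hσ x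
    refine ⟨_, ⟨mem_image_of_mem _ hA, mem_image_of_mem f hxA⟩, ?_⟩
    rintro _ ⟨hC', hxC⟩
    obtain ⟨C, hC, rfl⟩ := mem_image.mp hC'
    obtain ⟨y, hy, hyx⟩ := mem_image.mp hxC
    rw [huniq C ⟨hC, hsat C hC y x hyx hy⟩]

/-- Partitions whose blocks are unions of fibres of `f` correspond to partitions of `Fin m` via
`A ↦ f '' A`, with inverse `B ↦ f ⁻¹' B`. -/
theorem sum_pow_card_saturated_setPartitions (hf : Function.Surjective f) (μ : ℂ) :
    ∑ σ ∈ univ.filter (fun σ : Finset (Finset (Fin n)) =>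
        IsSetPartition σ ∧ ∀ A ∈ σ, ∀ x y, f x = f y → x ∈ A → y ∈ A), μ ^ σ.card
      = touchard m μ := by
  have hpre_inj : Function.Injective fun B : Finset (Fin m) => univ.filter (f · ∈ B) :=
    Function.LeftInverse.injective (g := Finset.image f) (image_filter_mem hf)
  symm
  refine sum_nbij' (fun η => η.image fun B => univ.filter (f · ∈ B))
    (fun σ => σ.image (Finset.image f)) ?_ ?_ ?_ ?_ ?_
  · intro η hη
    simp only [mem_filter, mem_univ, true_and] at hη ⊢
    refine ⟨isSetPartition_image_filter_mem hf hη, fun A hA x y hxy hx => ?_⟩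
    obtain ⟨B, -, rfl⟩ := mem_image.mp hA
    simpa [← hxy] using hx
  · intro σ hσ
    simp only [mem_filter, mem_univ, true_and] at hσ ⊢
    exact isSetPartition_image_image hf hσ.1 hσ.2
  · intro η _
    simp only [image_image, Function.comp_def, image_filter_mem hf, image_id']
  · intro σ hσ
    simp only [mem_filter, mem_univ, true_and] at hσ
    rw [image_image]
    exact (image_congr fun A hA => filter_mem_image (hσ.2 A hA)).trans image_id
  · intro η _
    rw [card_image_of_injective η hpre_inj]

end SetPartitions

theorem sum_pow_card_invariant_setPartitions (π : Equiv.Perm (Fin n)) (μ : ℂ) :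
    ∑ σ ∈ univ.filter (fun σ : Finset (Finset (Fin n)) =>
        IsSetPartition σ ∧ ∀ A ∈ σ, ∀ x ∈ A, π x ∈ A), μ ^ σ.card
      = touchard (numOrbits π) μ := by
  rw [← sum_pow_card_saturated_setPartitions (orbitIndex_surjective π)]
  refine sum_congr (filter_congr fun σ _ => and_congr_right fun _ => forall₂_congr fun A _ => ?_)
    fun _ _ => rfl
  simp only [orbitIndex_eq_iff]
  exact mapsTo_iff_forall_sameCycle (s := (A : Set (Fin n)))

theorem partition_permutation_touchard_multiplicative_general (n : ℕ)
    (g : List (Fin n) → ℂ) (μ : ℂ) :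
    (∑ σ ∈ Finset.univ.filter (IsSetPartition (n := n)),
        μ ^ σ.card * ∏ A ∈ σ,
          ∑ τ ∈ Finset.univ.filter
              (fun τ : Equiv.Perm (Fin n) => ∀ x, x ∉ A → τ x = x),
            cycleFun g A τ)
      = ∑ π : Equiv.Perm (Fin n), touchard (numOrbits π) μ * cycleFun g Finset.univ π := by
  calc _ = ∑ σ ∈ univ.filter (IsSetPartition (n := n)),
        ∑ π ∈ univ.filter (fun π : Equiv.Perm (Fin n) => ∀ A ∈ σ, ∀ x ∈ A, π x ∈ A),
          μ ^ σ.card * cycleFun g univ π := by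
        refine sum_congr rfl fun σ hσ => ?_
        rw [← mul_sum, ← prod_sum_permsSupportedIn_of_isSetPartition g (mem_filter.mp hσ).2]
        -- the two filters differ only in their decidability instances
        congr! 3 with A
        ext τ
        simp [mem_permsSupportedIn]
    _ = ∑ π : Equiv.Perm (Fin n), ∑ σ ∈ univ.filter (fun σ : Finset (Finset (Fin n)) =>
          IsSetPartition σ ∧ ∀ A ∈ σ, ∀ x ∈ A, π x ∈ A), μ ^ σ.card * cycleFun g univ π :=
        sum_comm' fun σ π => by simp only [mem_filter, mem_univ, true_and, and_true]
    _ = _ := by simp only [← sum_mul, sum_pow_card_invariant_setPartitions]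

/-- Generalized partition/permutation identity for a multiplicative function determined by a
cyclically invariant `g` on nonempty lists of distinct elements:
`Σ_σ μ^{|σ|} Π_{A∈σ} (Σ_{τ ∈ Sym(A)} F(τ)) = Σ_{π∈S_n} T_{c(π)}(μ) · F(π)`. -/
theorem partition_permutation_touchard_multiplicative (n : ℕ) (hn : 1 ≤ n)
    (g : List (Fin n) → ℂ)
    (hg : ∀ l : List (Fin n), l ≠ [] → l.Nodup → g (l.rotate 1) = g l) (μ : ℂ) :
    (∑ σ ∈ Finset.univ.filter (IsSetPartition (n := n)),
        μ ^ σ.card * ∏ A ∈ σ,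
          ∑ τ ∈ Finset.univ.filter
              (fun τ : Equiv.Perm (Fin n) => ∀ x, x ∉ A → τ x = x),
            cycleFun g A τ)
      = ∑ π : Equiv.Perm (Fin n), touchard (numOrbits π) μ * cycleFun g Finset.univ π :=
  partition_permutation_touchard_multiplicative_general n g μ

end
end Stmt8
end

section
/- Let k ≥ 1, let O₁,…,O_p (p ≥ 1) be fixed k×k complex matrices, and let μ ∈ ℂ. Then the large-d limit of the Touchard-weighted correlation function of diagonal (or central) simple operators is totally disconnected: lim_{d→∞} d^{−p} · Σ_{π∈S_p} T_{c(π)}(μd) · ∏_{γ orbit of π} Tr( O_m·O_{π(m)}·O_{π²(m)}⋯O_{π^{|γ|−1}(m)} ) = μ^p · ∏_{m=1}^p Tr(O_m), where the limit is over d ∈ ℕ, S_p is the symmetric group on {1,…,p}, c(π) the number of orbits of π (fixed points counted as orbits), the cycle trace factors are well-defined by cyclic invariance, and T is the Touchard polynomial. (The leading contribution comes from the identity permutation, for which every orbit is a singleton.) -/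
open scoped BigOperators

namespace Stmt17
noncomputable section

/-- A set partition of `Fin n`: a finset of pairwise disjoint nonempty blocks whose union is
everything. -/
def IsSetPartition {n : ℕ} (σ : Finset (Finset (Fin n))) : Prop :=
  ∅ ∉ σ ∧ (∀ A ∈ σ, ∀ B ∈ σ, A ≠ B → Disjoint A B) ∧ σ.sup id = Finset.univ

instance {n : ℕ} (σ : Finset (Finset (Fin n))) : Decidable (IsSetPartition σ) :=
  inferInstanceAs (Decidable (∅ ∉ σ ∧ (∀ A ∈ σ, ∀ B ∈ σ, A ≠ B → Disjoint A B) ∧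
    σ.sup id = Finset.univ))

/-- Touchard (Bell) polynomial `T_m(x) = Σ_η x^{|η|}`, the sum over all set partitions of an
`m`-element set (`T_0 = 1`). -/
def touchard (m : ℕ) (x : ℂ) : ℂ :=
  ∑ η ∈ Finset.univ.filter (IsSetPartition (n := m)), x ^ η.card

/-- The orbit of `m` under the permutation `π`. -/
def permOrbit {p : ℕ} (π : Equiv.Perm (Fin p)) (m : Fin p) : Finset (Fin p) :=
  Finset.univ.filter (fun y => ∃ t ∈ Finset.range p, (π ^ t) m = y)

/-- Number of orbits of a permutation (fixed points counted as orbits). -/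
def numOrbits {p : ℕ} (π : Equiv.Perm (Fin p)) : ℕ :=
  (Finset.univ.image (permOrbit π)).card

/-- Minimal representatives of the orbits of a permutation. -/
def orbitReps {p : ℕ} (π : Equiv.Perm (Fin p)) : Finset (Fin p) :=
  Finset.univ.filter (fun m => ∀ y ∈ permOrbit π m, m ≤ y)

/-- Trace of the ordered product of the matrices `O` along the orbit of `m` under `π`:
`Tr(O_m · O_{π m} · O_{π² m} ⋯ O_{π^{|γ|−1} m})`; the starting point within the orbit is
immaterial by cyclic invariance of the trace. -/
def cycleTrace {p k : ℕ} (O : Fin p → Matrix (Fin k) (Fin k) ℂ)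
    (π : Equiv.Perm (Fin p)) (m : Fin p) : ℂ :=
  (((List.range (permOrbit π m).card).map (fun t => O ((π ^ t) m))).prod).trace

/-- Product over all orbits of `π` of the corresponding cycle traces. -/
def cycleTraceProd {p k : ℕ} (O : Fin p → Matrix (Fin k) (Fin k) ℂ)
    (π : Equiv.Perm (Fin p)) : ℂ :=
  ∏ m ∈ orbitReps π, cycleTrace O π m

/-! ### Auxiliary lemmas -/

lemma sum_card_part {n : ℕ} {σ : Finset (Finset (Fin n))} (h : IsSetPartition σ) :
    ∑ A ∈ σ, A.card = n := by
  obtain ⟨hne, hdisj, hsup⟩ := h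
  have hbi : σ.biUnion id = Finset.univ := by
    rw [← Finset.sup_eq_biUnion]; exact hsup
  have h1 := Finset.card_biUnion (t := id) hdisj
  rw [hbi, Finset.card_univ, Fintype.card_fin] at h1
  simpa using h1.symm

lemma part_card_le {n : ℕ} {σ : Finset (Finset (Fin n))} (h : IsSetPartition σ) :
    σ.card ≤ n := by
  have hpos : ∀ A ∈ σ, 1 ≤ A.card := fun A hA =>
    Finset.card_pos.mpr (Finset.nonempty_iff_ne_empty.mpr (fun hAe => h.1 (hAe ▸ hA)))
  calc σ.card = ∑ _A ∈ σ, 1 := by simp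
    _ ≤ ∑ A ∈ σ, A.card := Finset.sum_le_sum hpos
    _ = n := sum_card_part h

/-- The partition of `Fin p` into singletons. -/
def singPart (p : ℕ) : Finset (Finset (Fin p)) := Finset.univ.image fun m => {m}

lemma isSetPartition_singPart (p : ℕ) : IsSetPartition (singPart p) := by
  refine ⟨?_, ?_, ?_⟩
  · simp only [singPart, Finset.mem_image, Finset.mem_univ, true_and]
    rintro ⟨a, ha⟩
    exact Finset.singleton_ne_empty a ha
  · intro A hA B hB hAB
    simp only [singPart, Finset.mem_image, Finset.mem_univ, true_and] at hA hB
    obtain ⟨a, rfl⟩ := hA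
    obtain ⟨b, rfl⟩ := hB
    rw [Finset.disjoint_singleton]
    intro hab
    exact hAB (by rw [hab])
  · ext x
    simp only [Finset.mem_univ, iff_true]
    rw [Finset.mem_sup]
    exact ⟨{x}, by simp [singPart], by simp⟩

lemma card_singPart (p : ℕ) : (singPart p).card = p := by
  rw [singPart, Finset.card_image_of_injective _ (fun a b h => Finset.singleton_injective h)]
  simp

lemma part_card_eq {p : ℕ} {σ : Finset (Finset (Fin p))} (h : IsSetPartition σ)
    (hc : σ.card = p) : σ = singPart p := by
  have hpos : ∀ A ∈ σ, 1 ≤ A.card := fun A hA =>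
    Finset.card_pos.mpr (Finset.nonempty_iff_ne_empty.mpr (fun hAe => h.1 (hAe ▸ hA)))
  have hsum : ∑ A ∈ σ, (1 : ℕ) = ∑ A ∈ σ, A.card := by
    rw [sum_card_part h]; simp [hc]
  have hone : ∀ A ∈ σ, A.card = 1 :=
    fun A hA => ((Finset.sum_eq_sum_iff_of_le hpos).mp hsum A hA).symm
  have hbi : σ.biUnion id = Finset.univ := by
    rw [← Finset.sup_eq_biUnion]; exact h.2.2
  ext A
  simp only [singPart, Finset.mem_image, Finset.mem_univ, true_and]
  constructor
  · intro hA
    obtain ⟨a, ha⟩ := Finset.card_eq_one.mp (hone A hA)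
    exact ⟨a, ha.symm⟩
  · rintro ⟨a, rfl⟩
    have : a ∈ σ.biUnion id := by rw [hbi]; exact Finset.mem_univ a
    obtain ⟨B, hB, haB⟩ := Finset.mem_biUnion.mp this
    obtain ⟨b, rfl⟩ := Finset.card_eq_one.mp (hone B hB)
    have hab : a = b := by simpa using haB
    rw [hab]; exact hB

lemma sum_part_eq {p : ℕ} (n : ℕ) (hn : n = p) (f : ℕ → ℂ) :
    (∑ η ∈ Finset.univ.filter (IsSetPartition (n := n)),
      if η.card = p then f η.card else 0) = f p := by
  subst hn
  rw [Finset.sum_eq_single_of_mem (singPart n)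
    (Finset.mem_filter.mpr ⟨Finset.mem_univ _, isSetPartition_singPart n⟩)]
  · rw [card_singPart, if_pos rfl]
  · intro η hη hne
    rw [if_neg]
    intro hcard
    exact hne (part_card_eq (Finset.mem_filter.mp hη).2 hcard)

lemma exists_period {p : ℕ} (π : Equiv.Perm (Fin p)) (m : Fin p) :
    ∃ L, 0 < L ∧ L ≤ p ∧ (π ^ L) m = m := by
  have hcard : Fintype.card (Fin p) < Fintype.card (Fin (p + 1)) := by simp
  obtain ⟨a, b, hab, heq⟩ := Fintype.exists_ne_map_eq_of_card_lt
    (fun t : Fin (p + 1) => (π ^ (t : ℕ)) m) hcard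
  have main : ∀ a b : Fin (p + 1), (a : ℕ) < (b : ℕ) →
      (π ^ (a : ℕ)) m = (π ^ (b : ℕ)) m → ∃ L, 0 < L ∧ L ≤ p ∧ (π ^ L) m = m := by
    intro a b h heq
    refine ⟨(b : ℕ) - a, by omega, by have := b.isLt; omega, ?_⟩
    have key : (π ^ ((a : ℕ) + ((b : ℕ) - a))) m = (π ^ (a : ℕ)) m := by
      rw [show (a : ℕ) + ((b : ℕ) - a) = (b : ℕ) by omega, ← heq]
    rw [pow_add, Equiv.Perm.mul_apply] at key
    exact (π ^ (a : ℕ)).injective key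
  rcases Nat.lt_or_ge (a : ℕ) (b : ℕ) with h | h
  · exact main a b h heq
  · have hne : (a : ℕ) ≠ (b : ℕ) := fun hh => hab (Fin.ext hh)
    exact main b a (by omega) heq.symm

lemma pow_mem_permOrbit {p : ℕ} (π : Equiv.Perm (Fin p)) (m : Fin p) (s : ℕ) :
    (π ^ s) m ∈ permOrbit π m := by
  obtain ⟨L, hL0, hLp, hLm⟩ := exists_period π m
  have hfix : ∀ q : ℕ, (π ^ (L * q)) m = m := by
    intro q
    induction q with
    | zero => simp
    | succ q ih => rw [Nat.mul_succ, pow_add, Equiv.Perm.mul_apply, hLm, ih]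
  have key : (π ^ s) m = (π ^ (s % L)) m := by
    conv_lhs => rw [show s = s % L + L * (s / L) from (Nat.mod_add_div s L).symm]
    rw [pow_add, Equiv.Perm.mul_apply, hfix]
  rw [key, permOrbit, Finset.mem_filter]
  exact ⟨Finset.mem_univ _, s % L,
    Finset.mem_range.mpr (lt_of_lt_of_le (Nat.mod_lt s hL0) hLp), rfl⟩

lemma mem_permOrbit_self {p : ℕ} (π : Equiv.Perm (Fin p)) (m : Fin p) :
    m ∈ permOrbit π m := by
  simpa using pow_mem_permOrbit π m 0

lemma permOrbit_apply {p : ℕ} (π : Equiv.Perm (Fin p)) (m : Fin p) :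
    permOrbit π (π m) = permOrbit π m := by
  obtain ⟨L, hL0, hLp, hLm⟩ := exists_period π m
  apply Finset.Subset.antisymm
  · intro y hy
    rw [permOrbit, Finset.mem_filter] at hy
    obtain ⟨-, t, -, ht⟩ := hy
    have hyeq : y = (π ^ (t + 1)) m := by
      rw [← ht, pow_succ, Equiv.Perm.mul_apply]
    rw [hyeq]
    exact pow_mem_permOrbit π m (t + 1)
  · intro y hy
    rw [permOrbit, Finset.mem_filter] at hy
    obtain ⟨-, t, -, ht⟩ := hy
    have hyeq : y = (π ^ (t + L - 1)) (π m) := by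
      have h1 : (π ^ (t + L - 1)) (π m) = (π ^ (t + L - 1) * π) m := rfl
      rw [h1, ← pow_succ, show t + L - 1 + 1 = t + L by omega, pow_add,
        Equiv.Perm.mul_apply, hLm, ht]
    rw [hyeq]
    exact pow_mem_permOrbit π (π m) _

lemma numOrbits_le {p : ℕ} (π : Equiv.Perm (Fin p)) : numOrbits π ≤ p := by
  calc numOrbits π ≤ Finset.univ.card := Finset.card_image_le
    _ = p := by simp

lemma eq_one_of_numOrbits {p : ℕ} (π : Equiv.Perm (Fin p)) (h : numOrbits π = p) :
    π = 1 := by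
  have hinj : Set.InjOn (permOrbit π) (Finset.univ : Finset (Fin p)) := by
    rw [← Finset.card_image_iff]
    rw [numOrbits] at h
    simp [h]
  apply Equiv.ext
  intro m
  rw [Equiv.Perm.one_apply]
  exact hinj (Finset.mem_coe.mpr (Finset.mem_univ (π m)))
    (Finset.mem_coe.mpr (Finset.mem_univ m)) (permOrbit_apply π m)

lemma permOrbit_one {p : ℕ} (m : Fin p) : permOrbit (1 : Equiv.Perm (Fin p)) m = {m} := by
  ext y
  constructor
  · intro hy
    rw [permOrbit, Finset.mem_filter] at hy
    obtain ⟨-, t, -, ht⟩ := hy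
    simp only [one_pow, Equiv.Perm.one_apply] at ht
    simp [← ht]
  · intro hy
    rw [Finset.mem_singleton] at hy
    subst hy
    simpa using mem_permOrbit_self (1 : Equiv.Perm (Fin p)) y

lemma numOrbits_one (p : ℕ) : numOrbits (1 : Equiv.Perm (Fin p)) = p := by
  rw [numOrbits]
  have : Finset.univ.image (permOrbit (1 : Equiv.Perm (Fin p)))
      = Finset.univ.image (fun m : Fin p => ({m} : Finset (Fin p))) :=
    Finset.image_congr (fun m _ => permOrbit_one m)
  rw [this, Finset.card_image_of_injective _ (fun a b h => Finset.singleton_injective h)]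
  simp

lemma orbitReps_one (p : ℕ) : orbitReps (1 : Equiv.Perm (Fin p)) = Finset.univ := by
  rw [orbitReps]
  apply Finset.filter_true_of_mem
  intro m _ y hy
  rw [permOrbit_one] at hy
  rw [Finset.mem_singleton.mp hy]

lemma cycleTrace_one {p k : ℕ} (O : Fin p → Matrix (Fin k) (Fin k) ℂ) (m : Fin p) :
    cycleTrace O (1 : Equiv.Perm (Fin p)) m = (O m).trace := by
  rw [cycleTrace, permOrbit_one, Finset.card_singleton]
  simp

lemma cycleTraceProd_one {p k : ℕ} (O : Fin p → Matrix (Fin k) (Fin k) ℂ) :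
    cycleTraceProd O (1 : Equiv.Perm (Fin p)) = ∏ m : Fin p, (O m).trace := by
  rw [cycleTraceProd, orbitReps_one]
  exact Finset.prod_congr rfl fun m _ => cycleTrace_one O m

lemma tendsto_inv_pow_complex (c : ℕ) (hc : 1 ≤ c) :
    Filter.Tendsto (fun d : ℕ => (((d : ℂ)) ^ c)⁻¹) Filter.atTop (nhds 0) := by
  have h1 : Filter.Tendsto (fun d : ℕ => ((d : ℂ))⁻¹) Filter.atTop (nhds 0) := by
    have h2 : Filter.Tendsto (fun d : ℕ => ((d : ℝ))⁻¹) Filter.atTop (nhds 0) :=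
      tendsto_inv_atTop_zero.comp tendsto_natCast_atTop_atTop
    have h3 : Filter.Tendsto (fun d : ℕ => ((((d : ℝ))⁻¹ : ℝ) : ℂ)) Filter.atTop
        (nhds (((0 : ℝ) : ℂ))) := (Complex.continuous_ofReal.tendsto 0).comp h2
    simp only [Complex.ofReal_inv, Complex.ofReal_natCast, Complex.ofReal_zero] at h3
    exact h3
  have := h1.pow c
  simpa [zero_pow (by omega : c ≠ 0), inv_pow] using this

lemma term_tendsto {p : ℕ} (c : ℕ) (hc : c ≤ p) (A : ℂ) :
    Filter.Tendsto (fun d : ℕ => A * ((d : ℂ) ^ c * ((d : ℂ) ^ p)⁻¹)) Filter.atTop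
      (nhds (if c = p then A else 0)) := by
  rcases eq_or_lt_of_le hc with rfl | hlt
  · rw [if_pos rfl]
    apply Filter.Tendsto.congr' _ tendsto_const_nhds
    filter_upwards [Filter.eventually_ge_atTop 1] with d hd
    have hd0 : (d : ℂ) ≠ 0 := Nat.cast_ne_zero.mpr (by omega)
    rw [mul_inv_cancel₀ (pow_ne_zero _ hd0), mul_one]
  · rw [if_neg hlt.ne]
    have h0 : Filter.Tendsto (fun d : ℕ => ((d : ℂ) ^ (p - c))⁻¹) Filter.atTop (nhds 0) :=
      tendsto_inv_pow_complex _ (by omega)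
    have heq : ∀ᶠ d : ℕ in Filter.atTop,
        ((d : ℂ) ^ (p - c))⁻¹ = (d : ℂ) ^ c * ((d : ℂ) ^ p)⁻¹ := by
      filter_upwards [Filter.eventually_ge_atTop 1] with d hd
      have hd0 : (d : ℂ) ≠ 0 := Nat.cast_ne_zero.mpr (by omega)
      have hsplit : (d : ℂ) ^ p = (d : ℂ) ^ c * (d : ℂ) ^ (p - c) := by
        rw [← pow_add]; congr 1; omega
      rw [hsplit, mul_inv, ← mul_assoc, mul_inv_cancel₀ (pow_ne_zero _ hd0), one_mul]
    have := (h0.congr' heq).const_mul A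
    simpa using this

/-- The large-`d` limit of the Touchard-weighted correlation function of diagonal (or central)
simple operators is totally disconnected:
`lim_{d→∞} d^{−p} Σ_{π∈S_p} T_{c(π)}(μd) Π_γ Tr(O_m O_{π m} ⋯) = μ^p Π_m Tr(O_m)`. -/
theorem large_d_limit_totally_disconnected (k p : ℕ) (hk : 1 ≤ k) (hp : 1 ≤ p)
    (O : Fin p → Matrix (Fin k) (Fin k) ℂ) (μ : ℂ) :
    Filter.Tendsto
      (fun d : ℕ => ((d : ℂ) ^ p)⁻¹ * ∑ π : Equiv.Perm (Fin p),
        touchard (numOrbits π) (μ * (d : ℂ)) * cycleTraceProd O π)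
      Filter.atTop
      (nhds (μ ^ p * ∏ m : Fin p, (O m).trace)) := by
  have key : ∀ d : ℕ, ((d : ℂ) ^ p)⁻¹ * ∑ π : Equiv.Perm (Fin p),
        touchard (numOrbits π) (μ * (d : ℂ)) * cycleTraceProd O π
      = ∑ π : Equiv.Perm (Fin p),
          ∑ η ∈ Finset.univ.filter (IsSetPartition (n := numOrbits π)),
            (μ ^ η.card * cycleTraceProd O π) * ((d : ℂ) ^ η.card * ((d : ℂ) ^ p)⁻¹) := by
    intro d
    rw [Finset.mul_sum]
    refine Finset.sum_congr rfl fun π _ => ?_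
    rw [touchard, Finset.sum_mul, Finset.mul_sum]
    refine Finset.sum_congr rfl fun η _ => ?_
    rw [mul_pow]; ring
  have hlim : Filter.Tendsto (fun d : ℕ => ∑ π : Equiv.Perm (Fin p),
      ∑ η ∈ Finset.univ.filter (IsSetPartition (n := numOrbits π)),
        (μ ^ η.card * cycleTraceProd O π) * ((d : ℂ) ^ η.card * ((d : ℂ) ^ p)⁻¹))
      Filter.atTop
      (nhds (∑ π : Equiv.Perm (Fin p),
        ∑ η ∈ Finset.univ.filter (IsSetPartition (n := numOrbits π)),
          if η.card = p then μ ^ η.card * cycleTraceProd O π else 0)) := by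
    apply tendsto_finset_sum
    intro π _
    apply tendsto_finset_sum
    intro η hη
    have hc : η.card ≤ p :=
      le_trans (part_card_le (Finset.mem_filter.mp hη).2) (numOrbits_le π)
    exact term_tendsto η.card hc _
  have hval : (∑ π : Equiv.Perm (Fin p),
      ∑ η ∈ Finset.univ.filter (IsSetPartition (n := numOrbits π)),
        if η.card = p then μ ^ η.card * cycleTraceProd O π else 0)
      = μ ^ p * ∏ m : Fin p, (O m).trace := by
    rw [Finset.sum_eq_single_of_mem (1 : Equiv.Perm (Fin p)) (Finset.mem_univ _)]
    · rw [sum_part_eq (numOrbits (1 : Equiv.Perm (Fin p))) (numOrbits_one p)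
        (fun c => μ ^ c * cycleTraceProd O 1), cycleTraceProd_one]
    · intro π _ hπ
      apply Finset.sum_eq_zero
      intro η hη
      rw [if_neg]
      intro hcard
      have h1 : η.card ≤ numOrbits π := part_card_le (Finset.mem_filter.mp hη).2
      have h2 : numOrbits π ≤ p := numOrbits_le π
      exact hπ (eq_one_of_numOrbits π (by omega))
  rw [← hval]
  exact hlim.congr (fun d => (key d).symm)

end
end Stmt17
end
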